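/- arXiv:1806.00783 — 6 statements merged into one kernel-verified Lean document; each statement's English description precedes it below -/
import Mathlib

section
/- Let k ≥ 1 and let M = (S, f, Δ_S) be a cycling k-machine. There exist M-good k-uniform directed hypergraphs of arbitrarily large chromatic number (i.e., for every m there is a finite M-good k-uniform directed hypergraph with chromatic number greater than m) if and only if there exists an M-compatible order on S × [k]. -/
/-- A set of `k`-ary edges forms a (k-uniform) directed hypergraph if
no edge has two equal coordinates. -/
def IsHypergraph {V : Type} {k : ℕ} (E : Set (Fin k → V)) : Prop :=
  ∀ e ∈ E, Function.Injective e

/-- The hypergraph `(V, E)` admits a proper coloring with `m` colors: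
on each edge, not all vertices receive the same color.  The chromatic number
is at most `m` iff this holds, and is greater than `m` iff it fails. -/
def Colorable {V : Type} {k : ℕ} (E : Set (Fin k → V)) (m : ℕ) : Prop :=
  ∃ c : V → Fin m, ∀ e ∈ E, ∃ i j : Fin k, c (e i) ≠ c (e j)

/-- The hypergraph `(V, E)` has an `M`-bad cycle of positive length, for the
`k`-machine `M = (S, f, B)`: a cycle `v₀, e₁, v₁, …, e_n, v_n` with `v_n = v₀`,
each `v_{i-1}, v_i` among the coordinates of `e_i` (witnessed by the trace
`(a, b)`), together with states `s₀, …, s_n` with `s_i ∈ f(s_{i-1}, tr(c,i))`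
and `(s₀, s_n) ∈ B`.  `M`-goodness is the negation of this. -/
def HasMBadCycle {V S : Type} {k : ℕ} (E : Set (Fin k → V))
    (f : S → Fin k × Fin k → Set S) (B : Set (S × S)) : Prop :=
  ∃ (n : ℕ) (v : Fin (n+1) → V) (e : Fin n → (Fin k → V)) (s : Fin (n+1) → S),
    0 < n ∧
    v (Fin.last n) = v 0 ∧
    (∀ i : Fin n, e i ∈ E) ∧
    (∀ i : Fin n, ∃ a b : Fin k,
      e i a = v i.castSucc ∧ e i b = v i.succ ∧ s i.succ ∈ f (s i.castSucc) (a, b)) ∧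
    (s 0, s (Fin.last n)) ∈ B

/-- An `M`-compatible order on `S × Fin k` for the cycling machine with
transition function `f`: a (strict) total order `r` such that the induced
orderings on `S × {i}` agree for all `i`, and `t ∈ f(s,(i,j))` implies
`(s,i) ≺ (t,j)`. -/
def MCompatibleOrder {S : Type} {k : ℕ} (f : S → Fin k × Fin k → Set S)
    (r : S × Fin k → S × Fin k → Prop) : Prop :=
  IsStrictTotalOrder (S × Fin k) r ∧
  (∀ (s t : S) (i j : Fin k), r (s, i) (t, i) ↔ r (s, j) (t, j)) ∧
  (∀ (s t : S) (i j : Fin k), t ∈ f s (i, j) → r (s, i) (t, j))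

section Aux

open Finset

def trip (u v : ℕ × ℕ × ℕ) : Prop :=
  u.1 < v.1 ∨ (u.1 = v.1 ∧ (u.2.1 < v.2.1 ∨ (u.2.1 = v.2.1 ∧ u.2.2 < v.2.2)))

lemma trip_trans {u v w : ℕ × ℕ × ℕ} (h1 : trip u v) (h2 : trip v w) : trip u w := by
  unfold trip at *; omega

lemma trip_irrefl (u : ℕ × ℕ × ℕ) : ¬ trip u u := by unfold trip; omega

lemma trip_tri (u v : ℕ × ℕ × ℕ) :
    trip u v ∨ (u.1 = v.1 ∧ u.2.1 = v.2.1 ∧ u.2.2 = v.2.2) ∨ trip v u := by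
  unfold trip; omega

lemma trip_of_lt {u v : ℕ × ℕ × ℕ} (h : u.1 < v.1) : trip u v := Or.inl h

lemma trip_fiber {x1 x2 x1' x2' r1 r2 c c' : ℕ}
    (hl : x1 < x2 ↔ x1' < x2') (he : x1 = x2 ↔ x1' = x2') :
    trip (x1, r1, c) (x2, r2, c) ↔ trip (x1', r1, c') (x2', r2, c') := by
  unfold trip; dsimp only; omega

lemma chain_of_transGen {α : Type*} {r : α → α → Prop} {a b : α}
    (h : Relation.TransGen r a b) :
    ∃ n : ℕ, ∃ g : Fin (n+1) → α, 0 < n ∧ g 0 = a ∧ g (Fin.last n) = b ∧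
      ∀ i : Fin n, r (g i.castSucc) (g i.succ) := by
  induction h with
  | single hrel =>
    refine ⟨1, ![a, _], one_pos, rfl, rfl, ?_⟩
    intro i
    fin_cases i
    simpa using hrel
  | @tail b2 c2 _ hbc IH =>
    obtain ⟨n, g, hn, hg0, hgl, hstep⟩ := IH
    refine ⟨n + 1, Fin.snoc g c2, by omega, ?_, ?_, ?_⟩
    · rw [← Fin.castSucc_zero, Fin.snoc_castSucc, hg0]
    · rw [Fin.snoc_last]
    · intro i
      induction i using Fin.lastCases with
      | last =>
        rw [Fin.succ_last, Fin.snoc_last, Fin.snoc_castSucc, hgl]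
        exact hbc
      | cast j =>
        rw [Fin.succ_castSucc, Fin.snoc_castSucc, Fin.snoc_castSucc]
        exact hstep j

lemma my_ramsey (m ℓ : ℕ) : ∀ q : ℕ, ∃ R : ℕ, ∀ (α : Type) [LinearOrder α]
    (C : Finset α → Fin (m+1)) (V : Finset α), R ≤ V.card →
    ∃ Y, Y ⊆ V ∧ Y.card = q ∧ ∃ γ, ∀ X, X ⊆ Y → X.card = ℓ → C X = γ := by
  induction ℓ with
  | zero =>
    intro q
    refine ⟨q, ?_⟩
    intro α _ C V hV
    obtain ⟨Y, hYV, hYcard⟩ := exists_subset_card_eq hV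
    refine ⟨Y, hYV, hYcard, C ∅, ?_⟩
    intro X hXY hX
    rw [Finset.card_eq_zero] at hX
    subst hX; rfl
  | succ ℓ IH =>
    intro q
    have claim : ∀ t : ℕ, ∃ R : ℕ, ∀ (α : Type) [LinearOrder α]
        (C : Finset α → Fin (m+1)) (V : Finset α), R ≤ V.card →
        ∃ P, P ⊆ V ∧ P.card = t ∧ ∃ g : α → Fin (m+1),
          ∀ x ∈ P, ∀ X, X ⊆ P.filter (fun y => x < y) → X.card = ℓ →
            C (insert x X) = g x := by
      intro t
      induction t with
      | zero =>
        exact ⟨0, fun α _ C V _ => ⟨∅, empty_subset _, card_empty, fun _ => 0, by simp⟩⟩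
      | succ t iht =>
        obtain ⟨Rt, hRt⟩ := iht
        obtain ⟨Ro, hRo⟩ := IH Rt
        refine ⟨Ro + 1, ?_⟩
        intro α _ C V hV
        have hVne : V.Nonempty := card_pos.mp (by omega)
        set a0 := V.min' hVne with ha0
        have ha0V : a0 ∈ V := V.min'_mem hVne
        have hV' : Ro ≤ (V.erase a0).card := by
          rw [card_erase_of_mem ha0V]; omega
        obtain ⟨Y1, hY1V, hY1card, γ0, hγ0⟩ := hRo α (fun X => C (insert a0 X)) (V.erase a0) hV'
        obtain ⟨P, hPY1, hPcard, g, hg⟩ := hRt α C Y1 (le_of_eq hY1card.symm)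
        have ha0P : a0 ∉ P := fun h => (mem_erase.mp (hY1V (hPY1 h))).1 rfl
        classical
        refine ⟨insert a0 P, ?_, ?_, Function.update g a0 γ0, ?_⟩
        · intro x hx
          rcases mem_insert.mp hx with rfl | hx
          · exact ha0V
          · exact (erase_subset _ _) (hY1V (hPY1 hx))
        · rw [card_insert_of_notMem ha0P, hPcard]
        · intro x hx X hXsub hXcard
          have hxgt : ∀ y ∈ X, x < y := fun y hy => (mem_filter.mp (hXsub hy)).2
          have hXP' : ∀ y ∈ X, y ∈ insert a0 P := fun y hy => (mem_filter.mp (hXsub hy)).1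
          rcases mem_insert.mp hx with rfl | hx
          · have hXY1 : X ⊆ Y1 := by
              intro y hy
              rcases mem_insert.mp (hXP' y hy) with h' | h
              · exact absurd (h' ▸ hxgt y hy) (lt_irrefl _)
              · exact hPY1 h
            rw [Function.update_self]
            exact hγ0 X hXY1 hXcard
          · have hxa0 : x ≠ a0 := fun h => ha0P (h ▸ hx)
            have ha0x : a0 < x :=
              lt_of_le_of_ne (V.min'_le x ((erase_subset _ _) (hY1V (hPY1 hx)))) (Ne.symm hxa0)
            have hXP : X ⊆ P.filter (fun y => x < y) := by
              intro y hy
              rcases mem_insert.mp (hXP' y hy) with h' | h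
              · exact absurd (h' ▸ (ha0x.trans (hxgt y hy))) (lt_irrefl _)
              · exact mem_filter.mpr ⟨h, hxgt y hy⟩
            rw [Function.update_of_ne hxa0]
            exact hg x hx X hXP hXcard
    obtain ⟨Rc, hRc⟩ := claim ((m+1) * q + 1)
    refine ⟨Rc, ?_⟩
    intro α _ C V hV
    obtain ⟨P, hPV, hPcard, g, hg⟩ := hRc α C V hV
    classical
    have hcard : Fintype.card (Fin (m+1)) * q < P.card := by
      simp [hPcard]
    have hcard' : (univ : Finset (Fin (m+1))).card * q < P.card := by
      simpa using hcard
    obtain ⟨γ, -, hγ⟩ := exists_lt_card_fiber_of_mul_lt_card_of_maps_to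
      (fun a _ => mem_univ (g a)) hcard'
    obtain ⟨Y, hYP, hYcard⟩ := exists_subset_card_eq (show q ≤ (P.filter fun x => g x = γ).card by omega)
    refine ⟨Y, fun z hz => hPV (mem_filter.mp (hYP hz)).1, hYcard, γ, ?_⟩
    intro X hXY hXcard
    have hXne : X.Nonempty := card_pos.mp (by omega)
    set x := X.min' hXne with hxdef
    have hxX : x ∈ X := X.min'_mem hXne
    have hins : insert x (X.erase x) = X := insert_erase hxX
    have hXe : (X.erase x) ⊆ P.filter (fun y => x < y) := by
      intro z hz
      have hzX : z ∈ X := (erase_subset _ _) hz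
      have hzx : z ≠ x := (mem_erase.mp hz).1
      refine mem_filter.mpr ⟨(mem_filter.mp (hYP (hXY hzX))).1, ?_⟩
      exact lt_of_le_of_ne (X.min'_le z hzX) (Ne.symm hzx)
    have hxP : x ∈ P := (mem_filter.mp (hYP (hXY hxX))).1
    have hgx : g x = γ := (mem_filter.mp (hYP (hXY hxX))).2
    have hcarde : (X.erase x).card = ℓ := by
      rw [card_erase_of_mem hxX, hXcard]; omega
    calc C X = C (insert x (X.erase x)) := by rw [hins]
      _ = g x := hg x hxP (X.erase x) hXe hcarde
      _ = γ := hgx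

theorem forward_dir
    {k : ℕ} (hk : 1 ≤ k) {S : Type} [Fintype S]
    (f : S → Fin k × Fin k → Set S)
    (hL : ∀ m : ℕ, ∃ (V : Type) (_ : Fintype V) (E : Set (Fin k → V)),
        IsHypergraph E ∧ ¬ HasMBadCycle E f (Set.diagonal S) ∧ ¬ Colorable E m) :
    (∃ r : S × Fin k → S × Fin k → Prop, MCompatibleOrder f r) := by
  classical
  obtain ⟨V, hV, E, hHyp, hGood, hCol⟩ := hL (Fintype.card (S → S → Bool))
  let step : V × S → V × S → Prop := fun x y =>
    ∃ e ∈ E, ∃ a b : Fin k, e a = x.1 ∧ e b = y.1 ∧ y.2 ∈ f x.2 (a, b)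
  have hIrr : ∀ x, ¬ Relation.TransGen step x x := by
    intro x hx
    obtain ⟨n, g, hn, hg0, hgl, hstep⟩ := chain_of_transGen hx
    apply hGood
    have hstep' : ∀ i : Fin n, ∃ e ∈ E, ∃ a b : Fin k,
        e a = (g i.castSucc).1 ∧ e b = (g i.succ).1 ∧
        (g i.succ).2 ∈ f ((g i.castSucc).2) (a, b) := hstep
    choose e heE a b h1 h2 h3 using hstep'
    refine ⟨n, fun i => (g i).1, e, fun i => (g i).2, hn,
      congrArg Prod.fst (hgl.trans hg0.symm), heE,
      fun i => ⟨a i, b i, h1 i, h2 i, h3 i⟩, ?_⟩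
    rw [Set.mem_diagonal_iff]
    exact congrArg Prod.snd (hg0.trans hgl.symm)
  let φ : V × S → ℕ := fun x => {y | Relation.TransGen step y x}.ncard
  have hφ : ∀ x y, step x y → φ x < φ y := by
    intro x y hxy
    apply Set.ncard_lt_ncard
    · rw [Set.ssubset_iff_of_subset (fun z hz => hz.tail hxy)]
      exact ⟨x, Relation.TransGen.single hxy, hIrr x⟩
    · exact Set.toFinite _
  let pat : V → S → S → Bool := fun v s t => decide (φ (v, s) < φ (v, t))
  let eqv : (S → S → Bool) ≃ Fin (Fintype.card (S → S → Bool)) := Fintype.equivFin _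
  unfold Colorable at hCol
  push_neg at hCol
  obtain ⟨estar, heE, hmono⟩ := hCol (fun v => eqv (pat v))
  have hpat : ∀ i j : Fin k, pat (estar i) = pat (estar j) :=
    fun i j => eqv.injective (hmono i j)
  have hlt : ∀ (i j : Fin k) (s t : S),
      (φ (estar i, s) < φ (estar i, t)) ↔ (φ (estar j, s) < φ (estar j, t)) := by
    intro i j s t
    have h := congrFun (congrFun (hpat i j) s) t
    simpa [pat, decide_eq_decide] using h
  have heq : ∀ (i j : Fin k) (s t : S),
      (φ (estar i, s) = φ (estar i, t)) ↔ (φ (estar j, s) = φ (estar j, t)) := by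
    intro i j s t
    have h1 := hlt i j s t
    have h2 := hlt i j t s
    omega
  let rkS : S → ℕ := fun s => ((Fintype.equivFin S) s : ℕ)
  have hrkS : Function.Injective rkS := fun s t h =>
    (Fintype.equivFin S).injective (Fin.val_injective h)
  let key : S × Fin k → ℕ × ℕ × ℕ := fun p => (φ (estar p.2, p.1), rkS p.1, (p.2 : ℕ))
  have hkey : Function.Injective key := by
    intro p p' h
    have h1 : rkS p.1 = rkS p'.1 := congrArg (fun u => u.2.1) h
    have h2 : (p.2 : ℕ) = (p'.2 : ℕ) := congrArg (fun u => u.2.2) h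
    exact Prod.ext (hrkS h1) (Fin.val_injective h2)
  refine ⟨fun p p' => trip (key p) (key p'), ⟨?_, ?_, ?_⟩⟩
  · exact { trichotomous := fun p p' hpp hpp' => by
              rcases trip_tri (key p) (key p') with h | h | h
              · exact absurd h hpp
              · exact hkey (by
                  exact Prod.ext h.1 (Prod.ext h.2.1 h.2.2))
              · exact absurd h hpp',
            irrefl := fun p => trip_irrefl _,
            trans := fun p p' p'' => trip_trans }
  · intro s t i j
    exact trip_fiber (hlt i j s t) (heq i j s t)
  · intro s t i j ht
    refine trip_of_lt ?_
    exact hφ (estar i, s) (estar j, t) ⟨estar, heE, i, j, rfl, rfl, ht⟩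


theorem backward_dir
    {k : ℕ} (hk : 1 ≤ k) {S : Type} [Fintype S]
    (f : S → Fin k × Fin k → Set S)
    (hR : ∃ r : S × Fin k → S × Fin k → Prop, MCompatibleOrder f r) :
    (∀ m : ℕ, ∃ (V : Type) (_ : Fintype V) (E : Set (Fin k → V)),
        IsHypergraph E ∧ ¬ HasMBadCycle E f (Set.diagonal S) ∧ ¬ Colorable E m) := by
  classical
  obtain ⟨r, hSTO, hfib, harc⟩ := hR
  intro m
  by_cases hS : Nonempty S
  · -- S nonempty: layered order construction via Ramsey
    obtain ⟨s00⟩ := hS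
    haveI : IsStrictTotalOrder (S × Fin k) r := hSTO
    haveI : DecidableRel r := Classical.decRel r
    haveI : Nonempty (S × Fin k) := ⟨(s00, ⟨0, hk⟩)⟩
    let i0 : Fin k := ⟨0, hk⟩
    let rS : S → S → Prop := fun s t => r (s, i0) (t, i0)
    haveI hrSsto : IsStrictTotalOrder S rS :=
      { trichotomous := fun s t hst hts => by
          rcases trichotomous_of r (s, i0) (t, i0) with h | h | h
          · exact absurd h hst
          · exact congrArg Prod.fst h
          · exact absurd h hts,
        irrefl := fun s h => hSTO.irrefl _ h,
        trans := fun s t u h1 h2 => hSTO.trans _ _ _ h1 h2 }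
    haveI : DecidableRel rS := Classical.decRel rS
    letI instS : LinearOrder S := linearOrderOfSTO rS
    let q := Fintype.card (S × Fin k)
    have hq : 0 < q := Fintype.card_pos
    let ρ : S × Fin k → Fin q := fun p =>
      ⟨(univ.filter (fun p' => r p' p)).card, by
        refine lt_of_le_of_lt (card_le_card (fun z hz => ?_) :
            (univ.filter (fun p' => r p' p)).card ≤ (univ.erase p).card) ?_
        · refine mem_erase.mpr ⟨?_, mem_univ _⟩
          rintro rfl
          exact hSTO.irrefl _ (mem_filter.mp hz).2
        · rw [card_erase_of_mem (mem_univ p), card_univ]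
          omega⟩
    have hρ : ∀ p p', r p p' → ρ p < ρ p' := by
      intro p p' h
      rw [Fin.lt_def]
      apply card_lt_card
      rw [ssubset_iff_of_subset (fun z hz => mem_filter.mpr
        ⟨mem_univ _, hSTO.trans _ _ _ (mem_filter.mp hz).2 h⟩)]
      exact ⟨p, mem_filter.mpr ⟨mem_univ _, h⟩, fun hp => hSTO.irrefl _ (mem_filter.mp hp).2⟩
    have hρinj : Function.Injective ρ := by
      intro p p' h
      rcases trichotomous_of r p p' with h' | h' | h'
      · exact absurd h (ne_of_lt (hρ _ _ h'))
      · exact h'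
      · exact absurd h.symm (ne_of_lt (hρ _ _ h'))
    let ℓ := Fintype.card S
    let jS : S ≃o Fin ℓ := (monoEquivOfFin _ rfl).symm
    obtain ⟨R0, hR0⟩ := my_ramsey m ℓ q
    let R := R0 + q + 1
    let Vt := S → Fin R
    let E : Set (Fin k → Vt) :=
      {e | ∃ y : Fin q → Fin R, StrictMono y ∧ ∀ a s, e a s = y (ρ (s, a))}
    refine ⟨Vt, inferInstance, E, ?_, ?_, ?_⟩
    · -- IsHypergraph
      rintro e ⟨y, hy, hrep⟩ a b hab
      have h := congrFun hab s00
      rw [hrep a s00, hrep b s00] at h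
      have := hρinj (hy.injective h)
      exact congrArg Prod.snd this
    · -- M-good
      rintro ⟨n, v, e, s, hn, hvl, heE, htr, hB⟩
      have hkey : ∀ i : Fin n, (v i.castSucc) (s i.castSucc) < (v i.succ) (s i.succ) := by
        intro i
        obtain ⟨a, b, hea, heb, hf⟩ := htr i
        obtain ⟨y, hy, hrep⟩ := heE i
        have h1 : v i.castSucc (s i.castSucc) = y (ρ (s i.castSucc, a)) := by
          rw [← hea]; exact hrep a _
        have h2 : v i.succ (s i.succ) = y (ρ (s i.succ, b)) := by
          rw [← heb]; exact hrep b _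
        rw [h1, h2]
        exact hy (hρ _ _ (harc _ _ _ _ hf))
      have hsm : StrictMono (fun i : Fin (n+1) => (v i) (s i)) :=
        Fin.strictMono_iff_lt_succ.mpr hkey
      have h0l : (0 : Fin (n+1)) < Fin.last n := by
        rw [Fin.lt_def]
        simpa using hn
      have hlast : s 0 = s (Fin.last n) := hB
      have h2 : v 0 (s 0) < v (Fin.last n) (s (Fin.last n)) := hsm h0l
      rw [hvl, ← hlast] at h2
      exact lt_irrefl _ h2
    · -- not colorable
      rintro ⟨c, hc⟩
      let C : Finset (Fin R) → Fin (m+1) := fun X =>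
        if h : X.card = ℓ then (c (fun s => X.orderEmbOfFin h (jS s))).castSucc else 0
      obtain ⟨Y, hYsub, hYcard, γ, hγ⟩ := hR0 (Fin R) C univ (by simp [R]; omega)
      let y := Y.orderEmbOfFin hYcard
      let ed : Fin k → Vt := fun a s => y (ρ (s, a))
      have hedE : ed ∈ E := ⟨y, y.strictMono, fun a s => rfl⟩
      have hcolor : ∀ a : Fin k, (c (ed a)).castSucc = γ := by
        intro a
        have hinj : Function.Injective (fun s : S => y (ρ (s, a))) := by
          intro s t h
          have := hρinj (y.injective h)
          exact congrArg Prod.fst this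
        let Xa : Finset (Fin R) := image (fun s => y (ρ (s, a))) univ
        have hXacard : Xa.card = ℓ := by
          rw [card_image_of_injective _ hinj, card_univ]
        have hXaY : Xa ⊆ Y := by
          intro x hx
          obtain ⟨s, -, rfl⟩ := mem_image.mp hx
          exact Y.orderEmbOfFin_mem hYcard _
        have hCXa := hγ Xa hXaY hXacard
        have hun : (fun i : Fin ℓ => y (ρ (jS.symm i, a))) = Xa.orderEmbOfFin hXacard := by
          apply orderEmbOfFin_unique hXacard
          · intro i; exact mem_image.mpr ⟨jS.symm i, mem_univ _, rfl⟩
          · intro i i' hii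
            apply y.strictMono
            apply hρ
            refine (hfib _ _ i0 a).mp ?_
            exact jS.symm.strictMono hii
        have hfun : (fun s => Xa.orderEmbOfFin hXacard (jS s)) = ed a := by
          funext s
          have h3 := congrFun hun (jS s)
          rw [← h3, jS.symm_apply_apply]
        rw [show C Xa = (c (fun s => Xa.orderEmbOfFin hXacard (jS s))).castSucc from dif_pos hXacard,
          hfun] at hCXa
        exact hCXa
      obtain ⟨i, jj, hij⟩ := hc ed hedE
      apply hij
      have := (hcolor i).trans (hcolor jj).symm
      exact Fin.castSucc_injective m this
  · -- S empty : complete k-uniform hypergraph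
    rw [not_nonempty_iff] at hS
    refine ⟨Fin (m * (k-1) + 1), inferInstance, {e | Function.Injective e},
      fun e he => he, ?_, ?_⟩
    · rintro ⟨n, v, e, s, -, -, -, -, -⟩
      exact hS.elim (s 0)
    · rintro ⟨c, hc⟩
      have hcard : Fintype.card (Fin m) * (k-1) < Fintype.card (Fin (m * (k-1) + 1)) := by
        simp
      obtain ⟨γ, hγ⟩ := Fintype.exists_lt_card_fiber_of_mul_lt_card (f := c) hcard
      have hk' : k ≤ (univ.filter fun x => c x = γ).card := by omega
      obtain ⟨T, hT, hTcard⟩ := exists_subset_card_eq hk'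
      let e : Fin k → Fin (m * (k-1) + 1) := T.orderEmbOfFin hTcard
      obtain ⟨i, j, hij⟩ := hc e (T.orderEmbOfFin hTcard).injective
      apply hij
      have hmem : ∀ a : Fin k, c (e a) = γ := by
        intro a
        have := hT (T.orderEmbOfFin_mem hTcard a)
        exact (mem_filter.mp this).2
      rw [hmem i, hmem j]


end Aux

/-- Let `k ≥ 1` and let `M = (S, f, Δ_S)` be a cycling
`k`-machine.  There exist `M`-good `k`-uniform directed hypergraphs of
arbitrarily large chromatic number iff there exists an `M`-compatible order
on `S × [k]`. -/
theorem cycling_machine_good_unbounded_chromatic_iff_compatible_order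
    {k : ℕ} (hk : 1 ≤ k) {S : Type} [Fintype S]
    (f : S → Fin k × Fin k → Set S) :
    (∀ m : ℕ, ∃ (V : Type) (_ : Fintype V) (E : Set (Fin k → V)),
        IsHypergraph E ∧ ¬ HasMBadCycle E f (Set.diagonal S) ∧ ¬ Colorable E m) ↔
    (∃ r : S × Fin k → S × Fin k → Prop, MCompatibleOrder f r) := by
  constructor
  · exact forward_dir hk f
  · exact backward_dir hk f
end

section
/- Let k ≥ 1 and let M = (S, f, Δ_S) be a cycling k-machine. If there is no M-compatible order on S × [k], then every finite M-good k-uniform directed hypergraph has chromatic number at most |S|!. -/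
section Aux

/-- From a `TransGen` witness extract an explicit finite path. -/
lemma transGen_fin {W : Type} (D : W → W → Prop) {x y : W} (h : Relation.TransGen D x y) :
    ∃ (n : ℕ) (w : Fin (n+1) → W), 0 < n ∧ w 0 = x ∧ w (Fin.last n) = y ∧
      ∀ i : Fin n, D (w i.castSucc) (w i.succ) := by
  induction h with
  | @single b hxy =>
    refine ⟨1, ![x, b], one_pos, rfl, rfl, ?_⟩
    intro i
    fin_cases i
    simpa using hxy
  | @tail b c hxb hbc ih =>
    obtain ⟨n, w, hn, hw0, hwl, hD⟩ := ih
    refine ⟨n + 1, Fin.snoc w c, Nat.succ_pos _, ?_, ?_, ?_⟩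
    · have h0 : (0 : Fin (n+2)) = Fin.castSucc 0 := rfl
      rw [h0, Fin.snoc_castSucc, hw0]
    · rw [Fin.snoc_last]
    · intro i
      refine Fin.lastCases ?_ ?_ i
      · rw [show (Fin.last n).succ = Fin.last (n+1) from Fin.succ_last n,
          Fin.snoc_castSucc, Fin.snoc_last, hwl]
        exact hbc
      · intro j
        rw [Fin.succ_castSucc, Fin.snoc_castSucc, Fin.snoc_castSucc]
        exact hD j

/-- Rank characterisation of a strict total order on a fintype. -/
lemma rank_iff {S : Type} [Fintype S] [DecidableEq S] (p : S → S → Prop) [DecidableRel p]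
    (htrans : ∀ a b c, p a b → p b c → p a c)
    (htri : ∀ a b, a ≠ b → p a b ∨ p b a) (hirr : ∀ a, ¬ p a a) (a b : S) :
    p a b ↔ (Finset.univ.filter (fun u => p u a)).card
      < (Finset.univ.filter (fun u => p u b)).card := by
  constructor
  · intro hab
    apply Finset.card_lt_card
    constructor
    · intro u hu
      simp only [Finset.mem_filter, Finset.mem_univ, true_and] at hu ⊢
      exact htrans u a b hu hab
    · intro hsub
      have := hsub (by simp [hab] : a ∈ Finset.univ.filter (fun u => p u b))
      simp only [Finset.mem_filter, Finset.mem_univ, true_and] at this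
      exact hirr a (this)
  · intro hlt
    by_contra hab
    rcases eq_or_ne a b with rfl | hne
    · exact lt_irrefl _ hlt
    · rcases htri a b hne with h | h
      · exact hab h
      · have := (by
          apply Finset.card_lt_card
          constructor
          · intro u hu
            simp only [Finset.mem_filter, Finset.mem_univ, true_and] at hu ⊢
            exact htrans u b a hu h
          · intro hsub
            have := hsub (by simp [h] : b ∈ Finset.univ.filter (fun u => p u a))
            simp only [Finset.mem_filter, Finset.mem_univ, true_and] at this
            exact hirr b this :
          (Finset.univ.filter (fun u => p u b)).card
            < (Finset.univ.filter (fun u => p u a)).card)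
        exact absurd hlt (not_lt.mpr this.le)

end Aux

/-- Let `k ≥ 1` and let `M = (S, f, Δ_S)` be a cycling
`k`-machine.  If there is no `M`-compatible order on `S × [k]`, then every
finite `M`-good `k`-uniform directed hypergraph has chromatic number at most
`|S|!`. -/


theorem cycling_machine_no_compatible_order_chromatic_le_factorial
    {k : ℕ} (hk : 1 ≤ k) {S : Type} [Fintype S]
    (f : S → Fin k × Fin k → Set S)
    (hno : ¬ ∃ r : S × Fin k → S × Fin k → Prop, MCompatibleOrder f r) :
    ∀ (V : Type) [Fintype V] (E : Set (Fin k → V)),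
      IsHypergraph E → ¬ HasMBadCycle E f (Set.diagonal S) →
      Colorable E (Nat.factorial (Fintype.card S)) := by
  classical
  intro V _ E hhyp hgood
  set W := V × S with hW
  -- the step digraph on `V × S`
  set D : W → W → Prop := fun x y =>
    ∃ ed ∈ E, ∃ a b : Fin k, ed a = x.1 ∧ ed b = y.1 ∧ y.2 ∈ f x.2 (a, b) with hD
  -- acyclicity
  have hacyc : ∀ x : W, ¬ Relation.TransGen D x x := by
    intro x hx
    apply hgood
    obtain ⟨n, w, hn, hw0, hwl, hDd⟩ := transGen_fin D hx
    choose ed hE a b h1 h2 h3 using hDd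
    refine ⟨n, fun i => (w i).1, ed, fun i => (w i).2, hn, ?_, hE, ?_, ?_⟩
    · show (w (Fin.last n)).1 = (w 0).1
      rw [hwl, hw0]
    · intro i
      exact ⟨a i, b i, h1 i, h2 i, h3 i⟩
    · show ((w 0).2, (w (Fin.last n)).2) ∈ Set.diagonal S
      rw [hwl, hw0]
      rfl
  -- partial order from the reflexive transitive closure
  have href : ∀ x : W, Relation.ReflTransGen D x x := fun _ => Relation.ReflTransGen.refl
  haveI : IsPartialOrder W (Relation.ReflTransGen D) :=
    { refl := href
      trans := fun _ _ _ h1 h2 => h1.trans h2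
      antisymm := by
        intro x y hxy hyx
        by_contra hne
        rcases Relation.reflTransGen_iff_eq_or_transGen.mp hxy with rfl | hxy'
        · exact hne rfl
        · exact hacyc x (hxy'.trans_left hyx) }
  obtain ⟨lin, hlinord, hle⟩ := extend_partialOrder (Relation.ReflTransGen D)
  -- the strict version of the linear order
  set slt : W → W → Prop := fun x y => lin x y ∧ x ≠ y with hslt
  have slt_irrefl : ∀ x, ¬ slt x x := fun x h => h.2 rfl
  have slt_trans : ∀ x y z, slt x y → slt y z → slt x z := by
    intro x y z h1 h2
    refine ⟨hlinord.trans _ _ _ h1.1 h2.1, ?_⟩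
    rintro rfl
    exact h1.2 (hlinord.antisymm _ _ h1.1 h2.1)
  have slt_total : ∀ x y, x ≠ y → slt x y ∨ slt y x := by
    intro x y hne
    rcases hlinord.total x y with h | h
    · exact Or.inl ⟨h, hne⟩
    · exact Or.inr ⟨h, hne.symm⟩
  have hDslt : ∀ x y, D x y → slt x y := by
    intro x y hxy
    have hne : x ≠ y := by rintro rfl; exact hacyc x (Relation.TransGen.single hxy)
    exact ⟨hle x y (Relation.ReflTransGen.single hxy), hne⟩
  -- per-vertex strict total order on `S` and its rank function
  set p : V → S → S → Prop := fun v s t => slt (v, s) (v, t) with hp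
  have p_trans : ∀ v a b c, p v a b → p v b c → p v a c :=
    fun v a b c h1 h2 => slt_trans _ _ _ h1 h2
  have p_irrefl : ∀ v a, ¬ p v a a := fun v a => slt_irrefl _
  have p_tri : ∀ v a b, a ≠ b → p v a b ∨ p v b a := by
    intro v a b hne
    exact slt_total _ _ (fun h => hne (congrArg Prod.snd h))
  set ρ : V → S → ℕ := fun v s => (Finset.univ.filter (fun u => p v u s)).card with hρ
  have hρlt : ∀ v s, ρ v s < Fintype.card S := by
    intro v s
    have : (Finset.univ.filter (fun u => p v u s)) ⊂ Finset.univ := by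
      refine Finset.ssubset_univ_iff.mpr ?_
      intro hEq
      have hs : s ∈ Finset.univ := Finset.mem_univ s
      rw [← hEq, Finset.mem_filter] at hs
      exact p_irrefl v s hs.2
    have h2 := Finset.card_lt_card this
    rwa [Finset.card_univ] at h2
  have hρ_iff : ∀ v a b, p v a b ↔ ρ v a < ρ v b := by
    intro v a b
    exact rank_iff (p v) (p_trans v) (p_tri v) (p_irrefl v) a b
  have hρ_inj : ∀ v, Function.Injective (ρ v) := by
    intro v a b hab
    by_contra hne
    rcases p_tri v a b hne with h | h
    · exact absurd ((hρ_iff v a b).mp h) (by omega)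
    · exact absurd ((hρ_iff v b a).mp h) (by omega)
  -- package the rank function as an embedding `S ↪ Fin (card S)`
  set emb : V → (S ↪ Fin (Fintype.card S)) := fun v =>
    ⟨fun s => ⟨ρ v s, hρlt v s⟩, by
      intro a b hab
      exact hρ_inj v (congrArg Fin.val hab)⟩ with hemb
  have hcard : Fintype.card (S ↪ Fin (Fintype.card S)) = Nat.factorial (Fintype.card S) := by
    rw [Fintype.card_embedding_eq, Fintype.card_fin, Nat.descFactorial_self]
  set enc := Fintype.equivFinOfCardEq hcard with henc
  refine ⟨fun v => enc (emb v), ?_⟩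
  intro e he
  by_contra hmono
  push_neg at hmono
  have hρeq : ∀ i j : Fin k, ρ (e i) = ρ (e j) := by
    intro i j
    have h := enc.injective (hmono i j)
    funext s
    exact congrArg Fin.val (DFunLike.congr_fun h s)
  -- build an M-compatible order from the monochromatic edge
  apply hno
  refine ⟨fun x y => slt (e x.2, x.1) (e y.2, y.1), ?_, ?_, ?_⟩
  · refine { irrefl := fun x => slt_irrefl _,
             trans := fun x y z h1 h2 => slt_trans _ _ _ h1 h2,
             trichotomous := ?_ }
    intro x y
    rcases eq_or_ne x y with rfl | hne
    · exact fun _ _ => rfl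
    · have hne' : (e x.2, x.1) ≠ (e y.2, y.1) := by
        intro hEq
        apply hne
        have h1 : e x.2 = e y.2 := congrArg Prod.fst hEq
        have h2 : x.1 = y.1 := congrArg Prod.snd hEq
        have h3 : x.2 = y.2 := hhyp e he h1
        exact Prod.ext h2 h3
      rcases slt_total _ _ hne' with h | h
      · exact fun h' _ => absurd h h'
      · exact fun _ h' => absurd h h'
  · intro s t i j
    have h1 : p (e i) s t ↔ p (e j) s t := by
      rw [hρ_iff, hρ_iff, hρeq i j]
    exact h1
  · intro s t i j hmem
    exact hDslt _ _ ⟨e, he, i, j, rfl, rfl, hmem⟩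
end

section
/- A digraph G is 2-balanced if and only if G is M_n-good for every natural number n, where M_n is the cycling 2-machine with state set {0,…,n}, transitions f(i,(1,2)) = min(i+1,n) for all i, f(i,(2,1)) = i−2 for i ≥ 2, f(0,(2,1)) = f(1,(2,1)) = ∅, and bad set Δ_{{0,…,n}}. -/
/-- The transition function of the cycling 2-machine `M_n` of Example 2:
states `{0, …, n}`, `f(i,(1,2)) = min(i+1,n)`, `f(i,(2,1)) = i-2` for `i ≥ 2`,
and `f(0,(2,1)) = f(1,(2,1)) = ∅`.  (Coordinates `1, 2` are `0, 1 : Fin 2`.) -/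
def MnTrans (n : ℕ) : Fin (n+1) → Fin 2 × Fin 2 → Set (Fin (n+1)) := fun s p =>
  if p = ((0 : Fin 2), (1 : Fin 2)) then
    {⟨min (s.1 + 1) n, Nat.lt_succ_of_le (Nat.min_le_right _ _)⟩}
  else if p = ((1 : Fin 2), (0 : Fin 2)) then
    (if 2 ≤ s.1 then {⟨s.1 - 2, Nat.lt_of_le_of_lt (Nat.sub_le _ _) s.2⟩} else ∅)
  else ∅

/-- A digraph `(V, E)` is `α`-balanced if every cycle of positive length
(each of whose edges is traversed forward or backward, as recorded by the
direction function `d`) which has `m` forward edges has strictly fewer than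
`α * m` backward edges. -/
def IsBalanced {V : Type} (E : Set (Fin 2 → V)) (α : ℝ) : Prop :=
  ∀ (n : ℕ) (v : Fin (n+1) → V) (e : Fin n → (Fin 2 → V)) (d : Fin n → Bool),
    0 < n →
    v (Fin.last n) = v 0 →
    (∀ i : Fin n, e i ∈ E) →
    (∀ i : Fin n, if d i = true then (e i 0 = v i.castSucc ∧ e i 1 = v i.succ)
          else (e i 0 = v i.succ ∧ e i 1 = v i.castSucc)) →
    ((Finset.univ.filter (fun i : Fin n => d i = false)).card : ℝ) <
      α * ((Finset.univ.filter (fun i : Fin n => d i = true)).card : ℝ)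

open Finset

private def mrun (N : ℕ) (d : ℕ → Bool) (s0 : ℕ) : ℕ → ℕ
  | 0 => s0
  | i+1 => if d i then min (mrun N d s0 i + 1) N else mrun N d s0 i - 2

private def fcnt (d : ℕ → Bool) (b : Bool) (i : ℕ) : ℕ :=
  ((Finset.range i).filter (fun j => d j = b)).card

private lemma fcnt_succ (d : ℕ → Bool) (b : Bool) (i : ℕ) :
    fcnt d b (i+1) = fcnt d b i + (if d i = b then 1 else 0) := by
  unfold fcnt
  rw [Finset.range_add_one, Finset.filter_insert]
  split
  · rw [Finset.card_insert_of_notMem (by simp)]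
  · simp

private lemma fcnt_mono (d : ℕ → Bool) (b : Bool) {i j : ℕ} (h : i ≤ j) :
    fcnt d b i ≤ fcnt d b j :=
  Finset.card_le_card (Finset.filter_subset_filter _ (Finset.range_subset_range.2 h))

private lemma fcnt_le (d : ℕ → Bool) (b : Bool) (i : ℕ) : fcnt d b i ≤ i := by
  unfold fcnt
  simpa using Finset.card_le_card (Finset.filter_subset (fun j => d j = b) (Finset.range i))

private lemma mrun_le (N : ℕ) (d : ℕ → Bool) (s0 : ℕ) (h : s0 ≤ N) :
    ∀ i, mrun N d s0 i ≤ N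
  | 0 => h
  | i+1 => by
    have := mrun_le N d s0 h i
    simp only [mrun]; split <;> omega

private lemma mrun_mono (N : ℕ) (d : ℕ → Bool) {s0 s1 : ℕ} (h : s0 ≤ s1) :
    ∀ i, mrun N d s0 i ≤ mrun N d s1 i
  | 0 => h
  | i+1 => by
    have := mrun_mono N d h i
    simp only [mrun]; split <;> omega

private lemma mrun_lower (N : ℕ) (d : ℕ → Bool) (s0 : ℕ) :
    ∀ i, min (s0 + fcnt d true i) N ≤ mrun N d s0 i + 2 * fcnt d false i
  | 0 => by simp [mrun, fcnt]
  | i+1 => by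
    have := mrun_lower N d s0 i
    rw [fcnt_succ, fcnt_succ]
    simp only [mrun]
    cases h : d i <;> simp only [h] <;> simp <;> omega

private lemma exists_fixed (g : ℕ → ℕ) (hg : Monotone g) (N : ℕ) (hgN : g N ≤ N)
    (P : ℕ → Prop) (hPN : P N) (hP : ∀ s, P s → P (g s)) :
    ∃ s, s ≤ N ∧ g s = s ∧ P s := by
  set a : ℕ → ℕ := fun j => g^[j] N with ha
  have hstep : ∀ j, a (j+1) = g (a j) := fun j => Function.iterate_succ_apply' g j N
  have hdec : ∀ j, a (j+1) ≤ a j := by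
    intro j; induction j with
    | zero => simpa [ha] using hgN
    | succ j ih =>
      have h := hg ih
      rw [← hstep j] at h
      rw [← hstep (j+1)] at h
      exact h
  have hle : ∀ j, a j ≤ N := by
    intro j; induction j with
    | zero => simp [ha]
    | succ j ih => exact le_trans (hdec j) ih
  have hPa : ∀ j, P (a j) := by
    intro j; induction j with
    | zero => simpa [ha]
    | succ j ih => rw [hstep]; exact hP _ ih
  have hne : (Set.range a).Nonempty := ⟨a 0, 0, rfl⟩
  obtain ⟨j, hj⟩ := Nat.sInf_mem hne
  refine ⟨a j, hle j, ?_, hPa j⟩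
  have h1 : sInf (Set.range a) ≤ a (j+1) := Nat.sInf_le ⟨j+1, rfl⟩
  have h2 := hdec j
  rw [← hstep j]
  omega

private lemma card_filter_eq_fcnt {n : ℕ} (d : Fin n → Bool) (b : Bool) :
    (Finset.univ.filter (fun i : Fin n => d i = b)).card
      = fcnt (fun j => if h : j < n then d ⟨j, h⟩ else true) b n := by
  unfold fcnt
  rw [Finset.card_filter, Finset.card_filter,
    ← Fin.sum_univ_eq_sum_range (fun j => if (if h : j < n then d ⟨j, h⟩ else true) = b then 1 else 0) n]
  exact Finset.sum_congr rfl (fun i _ => by simp [i.isLt])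

private lemma card_filter_rev {n : ℕ} (q : Fin n → Bool) (b : Bool) :
    (Finset.univ.filter (fun i : Fin n => q i.rev = b)).card
      = (Finset.univ.filter (fun i : Fin n => q i = b)).card := by
  apply Finset.card_bij (fun i _ => i.rev)
  · intro a ha; simp at ha ⊢; exact ha
  · intro a _ b _ h; exact Fin.rev_injective h
  · intro c hc; exact ⟨c.rev, by simp at hc ⊢; exact hc, by simp⟩

private lemma rev_cycle {V : Type} {n : ℕ} (v : Fin (n+1) → V) (e : Fin n → Fin 2 → V)
    (d : Fin n → Bool)
    (hv : v (Fin.last n) = v 0)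
    (hd : ∀ i : Fin n, if d i = true then (e i 0 = v i.castSucc ∧ e i 1 = v i.succ)
          else (e i 0 = v i.succ ∧ e i 1 = v i.castSucc)) :
    (fun i : Fin (n+1) => v i.rev) (Fin.last n) = (fun i : Fin (n+1) => v i.rev) 0 ∧
    (∀ i : Fin n, if (!(d i.rev)) = true
        then ((fun i : Fin n => e i.rev) i 0 = (fun i : Fin (n+1) => v i.rev) i.castSucc ∧
              (fun i : Fin n => e i.rev) i 1 = (fun i : Fin (n+1) => v i.rev) i.succ)
        else ((fun i : Fin n => e i.rev) i 0 = (fun i : Fin (n+1) => v i.rev) i.succ ∧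
              (fun i : Fin n => e i.rev) i 1 = (fun i : Fin (n+1) => v i.rev) i.castSucc)) := by
  constructor
  · simp [Fin.rev_last, Fin.rev_zero, hv]
  · intro i
    have h := hd i.rev
    simp only [Fin.rev_castSucc, Fin.rev_succ]
    cases hq : d i.rev <;> simp [hq] at h <;> simp [hq, h]

/-- A digraph `G` is 2-balanced iff `G` is `M_n`-good for
every natural number `n`, where `M_n` is the cycling 2-machine described in
`MnTrans`. -/
theorem two_balanced_iff_Mn_good_forall
    {V : Type} (E : Set (Fin 2 → V)) (hE : IsHypergraph E) :
    IsBalanced E 2 ↔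
      ∀ n : ℕ, ¬ HasMBadCycle E (MnTrans n) (Set.diagonal (Fin (n+1))) := by
  classical
  constructor
  · intro hbal
    intro N hbad
    obtain ⟨n, v, e, s, hn, hv, he, hstep, hB⟩ := hbad
    have hB' : s 0 = s (Fin.last n) := hB
    set d : Fin n → Bool := fun i => decide (e i 0 = v i.castSucc ∧ e i 1 = v i.succ) with hdd
    have key : ∀ i : Fin n,
        (if d i = true then (e i 0 = v i.castSucc ∧ e i 1 = v i.succ)
          else (e i 0 = v i.succ ∧ e i 1 = v i.castSucc)) ∧
        (if d i = true then ((s i.succ : ℕ) ≤ (s i.castSucc : ℕ) + 1)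
          else ((s i.succ : ℕ) + 2 = (s i.castSucc : ℕ))) := by
      intro i
      obtain ⟨a, b, ha, hb, hs⟩ := hstep i
      have hinj := hE (e i) (he i)
      fin_cases a <;> fin_cases b <;> simp at ha hb <;>
        simp [MnTrans, Prod.ext_iff, Fin.ext_iff] at hs
      · -- (0,1)
        have hdi : d i = true := by
          rw [hdd]; simp only [decide_eq_true_eq]; exact ⟨ha, hb⟩
        have hval := hs
        rw [hdi, if_pos rfl, if_pos rfl]
        exact ⟨⟨ha, hb⟩, by rw [hval]; exact le_trans inf_le_left le_rfl⟩
      · -- (1,0)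
        have hdi : d i = false := by
          rw [hdd]; simp only [decide_eq_false_iff_not]
          rintro ⟨h1, h2⟩
          have hee : e i 0 = e i 1 := by rw [h1, ← ha]
          exact absurd (hinj hee) (by decide)
        obtain ⟨h2, hs⟩ := hs
        have hval := hs
        rw [hdi, if_neg (by simp), if_neg (by simp)]
        exact ⟨⟨hb, ha⟩, by omega⟩
    have orient : ∀ i : Fin n, if d i = true then (e i 0 = v i.castSucc ∧ e i 1 = v i.succ)
          else (e i 0 = v i.succ ∧ e i 1 = v i.castSucc) := fun i => (key i).1
    set F := (Finset.univ.filter (fun i : Fin n => d i = true)).card with hF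
    set B := (Finset.univ.filter (fun i : Fin n => d i = false)).card with hBc
    set t : ℕ → ℤ := fun j => if h : j < n+1 then ((s ⟨j, h⟩ : ℕ) : ℤ) else 0 with ht
    have hstep2 : ∀ i : Fin n, t (i.val+1) - t i.val ≤ (if d i = true then (1:ℤ) else -2) := by
      intro i
      have h2 := (key i).2
      have e1 : t (i.val+1) = ((s i.succ : ℕ) : ℤ) := by
        rw [ht]; simp only; rw [dif_pos (by omega : i.val+1 < n+1)]; rfl
      have e0 : t i.val = ((s i.castSucc : ℕ) : ℤ) := by
        rw [ht]; simp only; rw [dif_pos (by omega : i.val < n+1)]; rfl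
      rw [e1, e0]
      cases hdi : d i <;> rw [hdi] at h2 <;> simp at h2 ⊢ <;> omega
    have tele : ∑ i : Fin n, (t (i.val+1) - t i.val) = t n - t 0 := by
      rw [Fin.sum_univ_eq_sum_range (fun j => t (j+1) - t j) n]
      exact Finset.sum_range_sub t n
    have ht0 : t n = t 0 := by
      rw [ht]; simp only
      rw [dif_pos (by omega : n < n+1), dif_pos (by omega : 0 < n+1)]
      have h1 : (⟨n, by omega⟩ : Fin (n+1)) = Fin.last n := rfl
      have h2 : (⟨0, by omega⟩ : Fin (n+1)) = 0 := rfl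
      rw [h1, h2, ← hB']
    have hsum2 : ∑ i : Fin n, (if d i = true then (1:ℤ) else -2) = (F:ℤ) - 2*(B:ℤ) := by
      rw [Finset.sum_ite, Finset.sum_const, Finset.sum_const]
      have hfc : (Finset.univ.filter (fun i : Fin n => ¬ d i = true))
          = (Finset.univ.filter (fun i : Fin n => d i = false)) :=
        Finset.filter_congr (fun i _ => by simp)
      rw [hfc, ← hF, ← hBc]
      push_cast
      ring
    have hFB : 2 * (B:ℤ) ≤ (F:ℤ) := by
      have hle : t n - t 0 ≤ (F:ℤ) - 2*B := by
        calc t n - t 0 = ∑ i : Fin n, (t (i.val+1) - t i.val) := tele.symm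
          _ ≤ ∑ i : Fin n, (if d i = true then (1:ℤ) else -2) :=
              Finset.sum_le_sum (fun i _ => hstep2 i)
          _ = (F:ℤ) - 2*(B:ℤ) := hsum2
      rw [ht0] at hle; omega
    obtain ⟨hv2, hd2⟩ := rev_cycle v e d hv orient
    have hb2 := hbal n (fun i => v i.rev) (fun i => e i.rev) (fun i => !(d i.rev)) hn hv2
      (fun i => he i.rev) hd2
    have c1 : (Finset.univ.filter (fun i : Fin n => (!(d i.rev)) = false)).card = F := by
      rw [hF]
      have hfc : (Finset.univ.filter (fun i : Fin n => (!(d i.rev)) = false))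
          = (Finset.univ.filter (fun i : Fin n => d i.rev = true)) :=
        Finset.filter_congr (fun i _ => by simp)
      rw [hfc]
      exact card_filter_rev d true
    have c2 : (Finset.univ.filter (fun i : Fin n => (!(d i.rev)) = true)).card = B := by
      rw [hBc]
      have hfc : (Finset.univ.filter (fun i : Fin n => (!(d i.rev)) = true))
          = (Finset.univ.filter (fun i : Fin n => d i.rev = false)) :=
        Finset.filter_congr (fun i _ => by simp)
      rw [hfc]
      exact card_filter_rev d false
    rw [c1, c2] at hb2
    have hcast : (2:ℝ) * (B:ℝ) ≤ (F:ℝ) := by exact_mod_cast hFB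
    linarith
  · intro hgood
    intro n v e d hn hv he hd
    by_contra hcon
    push_neg at hcon
    obtain ⟨hv2, hd2⟩ := rev_cycle v e d hv hd
    set d' : Fin n → Bool := fun i => !(d i.rev) with hd'def
    set dn : ℕ → Bool := fun j => if h : j < n then d' ⟨j, h⟩ else true with hdn
    have hcF : (Finset.univ.filter (fun i : Fin n => d' i = true)).card = fcnt dn true n :=
      card_filter_eq_fcnt d' true
    have hcB : (Finset.univ.filter (fun i : Fin n => d' i = false)).card = fcnt dn false n :=
      card_filter_eq_fcnt d' false
    set Fn := fcnt dn true n with hFn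
    set Bn := fcnt dn false n with hBn
    -- relate to counts of d
    have hF : (Finset.univ.filter (fun i : Fin n => d i = false)).card = Fn := by
      rw [← hcF]
      have hfc : (Finset.univ.filter (fun i : Fin n => d' i = true))
          = (Finset.univ.filter (fun i : Fin n => d i.rev = false)) :=
        Finset.filter_congr (fun i _ => by simp [hd'def])
      rw [hfc, card_filter_rev d false]
    have hBB : (Finset.univ.filter (fun i : Fin n => d i = true)).card = Bn := by
      rw [← hcB]
      have hfc : (Finset.univ.filter (fun i : Fin n => d' i = false))
          = (Finset.univ.filter (fun i : Fin n => d i.rev = true)) :=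
        Finset.filter_congr (fun i _ => by simp [hd'def])
      rw [hfc, card_filter_rev d true]
    have hFB : 2 * Bn ≤ Fn := by
      have : 2 * ((Finset.univ.filter (fun i : Fin n => d i = true)).card : ℝ)
          ≤ ((Finset.univ.filter (fun i : Fin n => d i = false)).card : ℝ) := hcon
      rw [hF, hBB] at this
      exact_mod_cast this
    have hBle : Bn ≤ n := fcnt_le dn false n
    set N := 4*n+2 with hN
    set g : ℕ → ℕ := fun s0 => mrun N dn s0 n with hg
    obtain ⟨st, hstN, hfix, hstP⟩ := exists_fixed g
      (fun s0 s1 h => mrun_mono N dn h n) N (mrun_le N dn N le_rfl n)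
      (fun s0 => 2 + 2*Bn ≤ s0) (by omega)
      (by
        intro s0 hs0
        have h := mrun_lower N dn s0 n
        have hmin : 2 + 4*Bn ≤ min (s0 + Fn) N := le_min (by omega) (by omega)
        simp only [hg]
        omega)
    have hrun2 : ∀ i, i ≤ n → 2 ≤ mrun N dn st i := by
      intro i hi
      have h := mrun_lower N dn st i
      have h2 : fcnt dn false i ≤ Bn := fcnt_mono dn false hi
      have hmin : 2 + 2*Bn ≤ min (st + fcnt dn true i) N := le_min (by omega) (by omega)
      omega
    refine hgood N ⟨n, (fun i => v i.rev), (fun i => e i.rev),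
      (fun i => ⟨mrun N dn st i.val, Nat.lt_succ_of_le (mrun_le N dn st hstN i.val)⟩),
      hn, hv2, (fun i => he i.rev), ?_, ?_⟩
    · intro i
      have hdnval : dn i.val = d' i := by
        rw [hdn]; simp only [i.isLt, dif_pos]
      have h := hd2 i
      cases hdi : d' i
      · -- backward edge: trace (1,0)
        have hdi' : (!(d i.rev)) = false := hdi
        rw [hdi'] at h
        simp only [Bool.false_eq_true, if_false] at h
        refine ⟨1, 0, h.2, h.1, ?_⟩
        have h2le : 2 ≤ mrun N dn st i.val := hrun2 i.val (le_of_lt i.isLt)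
        simp only [MnTrans, Fin.val_succ, Fin.coe_castSucc]
        rw [if_neg (by simp [Prod.ext_iff, Fin.ext_iff]), if_pos trivial, if_pos h2le,
          Set.mem_singleton_iff]
        apply Fin.ext
        show mrun N dn st (i.val+1) = _
        rw [show mrun N dn st (i.val+1)
              = if dn i.val then min (mrun N dn st i.val + 1) N else mrun N dn st i.val - 2
            from rfl, hdnval, show d' i = false from hdi]
        simp
      · -- forward edge: trace (0,1)
        have hdi' : (!(d i.rev)) = true := hdi
        rw [hdi'] at h
        simp only [if_pos rfl] at h
        refine ⟨0, 1, h.1, h.2, ?_⟩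
        simp only [MnTrans, Fin.val_succ, Fin.coe_castSucc]
        rw [if_pos trivial, Set.mem_singleton_iff]
        apply Fin.ext
        show mrun N dn st (i.val+1) = _
        rw [show mrun N dn st (i.val+1)
              = if dn i.val then min (mrun N dn st i.val + 1) N else mrun N dn st i.val - 2
            from rfl, hdnval, show d' i = true from hdi]
        simp
    · show _ = _
      apply Fin.ext
      simp only [Fin.val_zero, Fin.val_last]
      exact hfix.symm
end

section
/- Let M = (S, f, Δ_S) be a cycling 2-machine (possibly non-deterministic). There exist M-good digraphs of arbitrarily large chromatic number (i.e., for every m there is a finite M-good digraph with chromatic number greater than m) if and only if for every n ≥ 1 the directed path P_n is M-good, where P_n is the digraph with vertex set {1,…,n+1} and edge set {(i,i+1) : 1 ≤ i ≤ n}. -/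
/-- The directed path `P_n`: vertex set `{1, …, n+1}` (modelled as
`Fin (n+1)`) and edges `(i, i+1)` for `1 ≤ i ≤ n`. -/
def dirPath (n : ℕ) : Set (Fin 2 → Fin (n+1)) :=
  {e | ∃ i : Fin n, e = ![i.castSucc, i.succ]}

namespace CTM

abbrev L : Type := Fin 2 × Fin 2

def dz (ℓ : L) : ℤ := if ℓ.2 = 1 then (if ℓ.1 = 0 then 1 else 0) else (if ℓ.1 = 0 then 0 else -1)


lemma dz_cases (ℓ : L) : (dz ℓ = 1 ∧ ℓ = (0,1)) ∨ (dz ℓ = -1 ∧ ℓ = (1,0)) ∨ (dz ℓ = 0 ∧ ℓ = (0,0)) ∨ (dz ℓ = 0 ∧ ℓ = (1,1)) := by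
  obtain ⟨a, b⟩ := ℓ
  fin_cases a <;> fin_cases b <;> simp [dz]

lemma dz_le_one (ℓ : L) : dz ℓ ≤ 1 := by rcases dz_cases ℓ with ⟨h,_⟩|⟨h,_⟩|⟨h,_⟩|⟨h,_⟩ <;> omega
lemma neg_one_le_dz (ℓ : L) : -1 ≤ dz ℓ := by rcases dz_cases ℓ with ⟨h,_⟩|⟨h,_⟩|⟨h,_⟩|⟨h,_⟩ <;> omega


variable {S : Type}

def Run (f : S → L → Set S) : List L → S → S → Prop
  | [], a, b => a = b
  | ℓ :: w, a, b => ∃ c, c ∈ f a ℓ ∧ Run f w c b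

variable (f : S → L → Set S)


lemma run_append (u v : List L) (a b : S) :
    Run f (u ++ v) a b ↔ ∃ c, Run f u a c ∧ Run f v c b := by
  induction u generalizing a with
  | nil =>
    constructor
    · intro h; exact ⟨a, rfl, h⟩
    · rintro ⟨c, rfl, h⟩; exact h
  | cons ℓ u ih =>
    constructor
    · rintro ⟨c, hc, hrest⟩
      obtain ⟨d, hd1, hd2⟩ := (ih c).1 hrest
      exact ⟨d, ⟨c, hc, hd1⟩, hd2⟩
    · rintro ⟨d, ⟨c, hc, hd1⟩, hd2⟩
      exact ⟨c, hc, (ih c).2 ⟨d, hd1, hd2⟩⟩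

def dsum (w : List L) : ℤ := (w.map dz).sum

lemma dsum_append (u v : List L) : dsum (u ++ v) = dsum u + dsum v := by
  simp [dsum]

def pow (u : List L) : ℕ → List L
  | 0 => []
  | k+1 => u ++ pow u k

lemma dsum_pow (u : List L) (k : ℕ) : dsum (pow u k) = k * dsum u := by
  induction k with
  | zero => simp [pow, dsum]
  | succ k ih => simp [pow, dsum_append, ih]; ring

lemma run_pump (A u : List L)
    (h : ∀ x y, Run f (A ++ u) x y ↔ Run f A x y) :
    ∀ (k : ℕ) (R : List L) (x y : S),
      Run f (A ++ pow u k ++ R) x y ↔ Run f (A ++ R) x y := by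
  intro k
  induction k with
  | zero => intro R x y; simp [pow]
  | succ k ih =>
    intro R x y
    have e1 : A ++ pow u (k+1) ++ R = (A ++ u) ++ (pow u k ++ R) := by
      simp [pow, List.append_assoc]
    have e2 : A ++ (pow u k ++ R) = A ++ pow u k ++ R := by
      simp [List.append_assoc]
    rw [e1, run_append]
    constructor
    · rintro ⟨c, hc, hr⟩
      have hc' : Run f A x c := (h x c).1 hc
      have : Run f (A ++ (pow u k ++ R)) x y := (run_append f _ _ _ _).2 ⟨c, hc', hr⟩
      rw [e2] at this; exact (ih R x y).1 this
    · intro hr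
      have := (ih R x y).2 hr
      rw [← e2] at this
      obtain ⟨c, hc, hr2⟩ := (run_append f _ _ _ _).1 this
      exact ⟨c, (h x c).2 hc, hr2⟩

/-- slice of an ℕ-indexed word -/
def slice (ε : ℕ → L) (a b : ℕ) : List L := (List.range (b - a)).map (fun k => ε (a + k))

lemma slice_length (ε : ℕ → L) (a b : ℕ) : (slice ε a b).length = b - a := by
  simp [slice]

lemma slice_succ (ε : ℕ → L) (a k : ℕ) :
    slice ε a (a + k + 1) = slice ε a (a + k) ++ [ε (a + k)] := by
  simp [slice, show a+k+1-a = k+1 by omega, show a+k-a = k by omega, List.range_succ]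

lemma slice_append (ε : ℕ → L) (a k1 k2 : ℕ) :
    slice ε a (a + k1) ++ slice ε (a + k1) (a + k1 + k2) = slice ε a (a + k1 + k2) := by
  induction k2 with
  | zero => simp [slice]
  | succ k2 ih =>
    have h1 : a + k1 + (k2 + 1) = (a + k1 + k2) + 1 := by ring
    have h2 : a + (k1 + (k2 + 1)) = (a + k1 + k2) + 1 := by ring
    rw [h1]
    rw [show (a + k1 + k2) + 1 = (a + k1) + k2 + 1 from rfl, slice_succ,
        show a + k1 + k2 + 1 = a + (k1 + k2) + 1 from by ring, slice_succ,
        show a + (k1+k2) = a + k1 + k2 from by ring, ← ih]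
    simp [List.append_assoc]

lemma slice_split (ε : ℕ → L) (a b c : ℕ) (hab : a ≤ b) (hbc : b ≤ c) :
    slice ε a c = slice ε a b ++ slice ε b c := by
  obtain ⟨k1, rfl⟩ := Nat.exists_eq_add_of_le hab
  obtain ⟨k2, rfl⟩ := Nat.exists_eq_add_of_le hbc
  rw [show a + k1 + k2 = a + k1 + k2 from rfl, ← slice_append ε a k1 k2]

def IsRunOn (ε : ℕ → L) (g : ℕ → S) : Prop := ∀ i, g (i+1) ∈ f (g i) (ε i)

lemma slice_run (ε : ℕ → L) (g : ℕ → S) (h : IsRunOn f ε g) (a : ℕ) :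
    ∀ k, Run f (slice ε a (a + k)) (g a) (g (a + k)) := by
  intro k
  induction k with
  | zero => simp [slice, Run]
  | succ k ih =>
    rw [show a + (k+1) = a + k + 1 from rfl, slice_succ, run_append]
    exact ⟨g (a+k), ih, ⟨g (a+k+1), h (a+k), rfl⟩⟩

/-- prefix-sum heights -/
def hts (ε : ℕ → L) (i : ℕ) : ℤ := dsum (slice ε 0 i)

lemma hts_succ (ε : ℕ → L) (i : ℕ) : hts ε (i+1) = hts ε i + dz (ε i) := by
  have := slice_succ ε 0 i
  simp only [Nat.zero_add] at this
  simp [hts, this, dsum_append, dsum]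

lemma dsum_slice (ε : ℕ → L) (a b : ℕ) (hab : a ≤ b) :
    dsum (slice ε a b) = hts ε b - hts ε a := by
  have := slice_split ε 0 a b (Nat.zero_le _) hab
  have h2 : hts ε b = hts ε a + dsum (slice ε a b) := by
    rw [hts, this, dsum_append]; rfl
  omega


lemma run_exists_fun (w : List L) (a b : S) (h : Run f w a b) :
    ∃ g : ℕ → S, g 0 = a ∧ g w.length = b ∧
      ∀ i < w.length, g (i+1) ∈ f (g i) (w.getD i (0,0)) := by
  induction w generalizing a with
  | nil => exact ⟨fun _ => a, rfl, h.symm ▸ rfl, by intro i hi; simp at hi⟩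
  | cons ℓ u ih =>
    obtain ⟨c, hc, hr⟩ := h
    obtain ⟨g', hg0, hgl, hgs⟩ := ih c hr
    refine ⟨fun i => if i = 0 then a else g' (i-1), rfl, by simp [hgl], ?_⟩
    intro i hi
    match i with
    | 0 => simpa [hg0] using hc
    | Nat.succ j =>
      have hj : j < u.length := by simpa using hi
      simpa using hgs j hj

lemma abs_hts_le (ε : ℕ → L) (i : ℕ) : -(i:ℤ) ≤ hts ε i ∧ hts ε i ≤ i := by
  induction i with
  | zero => simp [hts, slice, dsum]
  | succ i ih =>
    have h1 := dz_le_one (ε i); have h2 := neg_one_le_dz (ε i)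
    have := hts_succ ε i
    push_cast
    omega

lemma slice_eq_self (w : List L) : slice (fun i => w.getD i (0,0)) 0 w.length = w := by
  apply List.ext_getElem
  · simp [slice]
  · intro i h1 h2
    simp only [slice, List.getElem_map, List.getElem_range]
    rw [Nat.zero_add, List.getD_eq_getElem w _ (by simpa [slice] using h1)]

/-- balanced words are safe -/
lemma bal_safe (f2 : S → Fin 2 × Fin 2 → Set S)
    (hR : ∀ n : ℕ, 1 ≤ n → ¬ HasMBadCycle (dirPath n) f2 (Set.diagonal S))
    (w : List L) (hw : w ≠ []) (hbal : dsum w = 0) (a : S)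
    (hrun : Run (fun s ℓ => f2 s ℓ) w a a) : False := by
  classical
  set N := w.length with hN
  have hN1 : 1 ≤ N := by
    cases w with
    | nil => exact absurd rfl hw
    | cons x u => simp [hN]
  set ε : ℕ → L := fun i => w.getD i (0,0) with hε
  obtain ⟨g, hg0, hgN, hgs⟩ := run_exists_fun (fun s ℓ => f2 s ℓ) w a a hrun
  have htsN : hts ε N = 0 := by
    rw [hts, hN, slice_eq_self w]; exact hbal
  have hts0 : hts ε 0 = 0 := by simp [hts, slice, dsum]
  set n' := 2*N + 2 with hn'
  have hn'1 : 1 ≤ n' := by omega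
  set pos : ℕ → ℕ := fun i => (hts ε i + (N+1)).toNat with hpos
  have hposZ : ∀ i, i ≤ N → (pos i : ℤ) = hts ε i + (N+1) := by
    intro i hi
    have h1 := abs_hts_le ε i
    simp only [hpos]
    rw [Int.toNat_of_nonneg (by push_cast; omega)]
  have hposB : ∀ i, i ≤ N → 1 ≤ pos i ∧ pos i ≤ 2*N+1 := by
    intro i hi
    have h1 := abs_hts_le ε i
    have h2 := hposZ i hi
    constructor <;> omega
  -- base of edge i
  set base : ℕ → ℕ := fun i =>
    if (ε i).2 = 1 then max (pos i) (pos (i+1)) - 1 else min (pos i) (pos (i+1)) with hbase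
  have hbaseB : ∀ i, i < N → 1 ≤ base i + 1 ∧ base i + 1 ≤ n' := by
    intro i hi
    have hb1 := hposB i (by omega)
    have hb2 := hposB (i+1) (by omega)
    constructor
    · omega
    · simp only [hbase]; split <;> omega
  refine hR n' hn'1 ?_
  refine ⟨N, fun i => ⟨pos i.val, by have := (hposB i.val (by omega)).2; omega⟩,
    fun i => fun j => ⟨base i.val + j.val,
      by have := (hbaseB i.val i.isLt).2; have := j.isLt; omega⟩,
    fun i => g i.val, by omega, ?_, ?_, ?_, ?_⟩
  · -- closure
    apply Fin.ext
    simp only [Fin.val_last, Fin.val_zero]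
    have e0 : pos N = pos 0 := by
      have a1 := hposZ 0 (by omega)
      have a2 := hposZ N (le_refl N)
      omega
    exact e0
  · -- membership
    intro i
    refine ⟨⟨base i.val, by have := (hbaseB i.val i.isLt).2; omega⟩, ?_⟩
    funext j
    fin_cases j
    · apply Fin.ext; simp
    · apply Fin.ext; simp
  · -- traces
    intro i
    have hi1 : i.val < N := i.isLt
    have hb1 := hposB i.val (by omega)
    have hb2 := hposB (i.val+1) (by omega)
    have hz1 := hposZ i.val (by omega)
    have hz2 := hposZ (i.val+1) (by omega)
    have hstep : hts ε (i.val+1) = hts ε i.val + dz (ε i.val) := hts_succ ε i.val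
    have hrel : (pos (i.val+1) : ℤ) = (pos i.val : ℤ) + dz (ε i.val) := by omega
    have hrun_i : g (i.val+1) ∈ f2 (g i.val) (ε i.val) := hgs i.val (by omega)
    refine ⟨(ε i.val).1, (ε i.val).2, ?_, ?_, ?_⟩
    · apply Fin.ext
      show base i.val + ((ε i.val).1).val = pos i.val
      rcases dz_cases (ε i.val) with ⟨hd,he⟩|⟨hd,he⟩|⟨hd,he⟩|⟨hd,he⟩ <;>
        rw [hd] at hrel <;>
        simp only [hbase, he] <;> simp <;> omega
    · apply Fin.ext
      show base i.val + ((ε i.val).2).val = pos (i.val + 1)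
      rcases dz_cases (ε i.val) with ⟨hd,he⟩|⟨hd,he⟩|⟨hd,he⟩|⟨hd,he⟩ <;>
        rw [hd] at hrel <;>
        simp only [hbase, he] <;> simp <;> omega
    · exact hrun_i
  · simp only [Set.mem_diagonal_iff]
    simp [hg0, hgN, ← hN]
    rw [hN, hgN]


lemma hts_zero (ε : ℕ → L) : hts ε 0 = 0 := by simp [hts, slice, dsum]

/-- vertex of the shift graph: strictly increasing (k+1)-tuple -/
def Vt (k n : ℕ) : Type := {g : Fin (k+1) → Fin n // StrictMono g}

def shiftRel {k n : ℕ} (u v : Vt k n) : Prop :=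
  (∀ j : Fin k, v.1 j.castSucc = u.1 j.succ) ∧ u.1 (Fin.last k) < v.1 (Fin.last k)

def StepRel {k n : ℕ} (u : Vt k n) (ℓ : L) (v : Vt k n) : Prop :=
  (dz ℓ = 1 ∧ shiftRel u v) ∨ (dz ℓ = -1 ∧ shiftRel v u) ∨ (dz ℓ = 0 ∧ u = v)

section Walk
variable {k n N : ℕ} (v : ℕ → Vt k n) (ε : ℕ → L)

lemma hts_per (hper : ∀ i, ε (i+N) = ε i) : ∀ i, hts ε (i+N) = hts ε i + hts ε N := by
  intro i
  induction i with
  | zero => simp [hts_zero]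
  | succ i ih =>
    have h1 : i + 1 + N = (i + N) + 1 := by ring
    rw [h1, hts_succ, ih, hper, hts_succ]; ring

lemma hts_mul_per (hper : ∀ i, ε (i+N) = ε i) : ∀ (m i : ℕ), hts ε (i + m*N) = hts ε i + m * hts ε N := by
  intro m
  induction m with
  | zero => simp
  | succ m ih =>
    intro i
    have h1 : i + (m+1)*N = (i + m*N) + N := by ring
    rw [h1, hts_per ε hper, ih]; push_cast; ring

lemma hts_ivt (z : ℤ) : ∀ (d a : ℕ), hts ε a ≤ z → z ≤ hts ε (a+d) → ∃ i, a ≤ i ∧ i ≤ a + d ∧ hts ε i = z := by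
  intro d
  induction d with
  | zero =>
    intro a h1 h2
    simp only [Nat.add_zero] at h2
    exact ⟨a, le_refl _, by omega, by omega⟩
  | succ d ih =>
    intro a h1 h2
    by_cases hc : z ≤ hts ε (a+d)
    · obtain ⟨i, hi1, hi2, hi3⟩ := ih a h1 hc
      exact ⟨i, hi1, by omega, hi3⟩
    · have hs := hts_succ ε (a+d)
      have hb := dz_le_one (ε (a+d))
      have h2' : a + (d+1) = a+d+1 := by ring
      rw [h2'] at h2
      refine ⟨a+d+1, by omega, by omega, by omega⟩

variable (hN : 1 ≤ N) (hper : ∀ i, ε (i+N) = ε i) (hD : 1 ≤ hts ε N)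
  (hnod : ∀ i j : ℕ, i ≤ j → hts ε i - hts ε j ≤ k)
include hN hper hD hnod

lemma hts_hits (z : ℤ) (hz : 0 ≤ z) : ∃ i, hts ε i = z := by
  have hm : hts ε (0 + z.toNat * N) = z.toNat * hts ε N := by
    rw [hts_mul_per ε hper]; simp [hts_zero]
  have : z ≤ hts ε (0 + z.toNat*N) := by
    rw [hm]
    calc z ≤ (z.toNat : ℤ) := Int.self_le_toNat z
    _ = (z.toNat : ℤ) * 1 := by ring
    _ ≤ (z.toNat : ℤ) * hts ε N := mul_le_mul_of_nonneg_left hD (by positivity)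
  obtain ⟨i, _, _, h3⟩ := hts_ivt ε z (z.toNat * N) 0 (by rw [hts_zero]; omega) this
  exact ⟨i, h3⟩

lemma visit_bound (z : ℤ) (i : ℕ) (hi : hts ε i = z) : i < N * (z.toNat + k + 1) := by
  by_contra hcon
  push_neg at hcon
  set m := z.toNat + k + 1 with hm
  have hcomm : m * N = N * m := Nat.mul_comm m N
  have h1 : m * N ≤ i := by omega
  have h2 : hts ε (m*N) = m * hts ε N := by
    have := hts_mul_per ε hper m 0; simpa [hts_zero] using this
  have h3 : hts ε (m*N) - hts ε i ≤ k := hnod _ _ h1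
  have h4 : (m:ℤ) ≤ hts ε (m*N) := by
    rw [h2]
    calc (m:ℤ) = (m:ℤ) * 1 := by ring
    _ ≤ (m:ℤ) * hts ε N := mul_le_mul_of_nonneg_left hD (by positivity)
  have h5 : (z.toNat : ℤ) ≥ z := Int.self_le_toNat z
  omega

end Walk

def lam (ε : ℕ → L) (N k h : ℕ) : ℕ := Nat.findGreatest (fun i => hts ε i = h) (N * (h + k + 1))

section Walk2
variable {k n N : ℕ} (ε : ℕ → L)
variable (hN : 1 ≤ N) (hper : ∀ i, ε (i+N) = ε i) (hD : 1 ≤ hts ε N)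
  (hnod : ∀ i j : ℕ, i ≤ j → hts ε i - hts ε j ≤ k)
include hN hper hD hnod

lemma lam_spec (h : ℕ) : hts ε (lam ε N k h) = h := by
  classical
  obtain ⟨i, hi⟩ := hts_hits ε hN hper hD hnod (h:ℤ) (by positivity)
  have hib : i ≤ N * (h + k + 1) := by
    have hv := visit_bound ε hN hper hD hnod (h:ℤ) i hi
    simp only [Int.toNat_natCast] at hv
    omega
  unfold lam
  exact Nat.findGreatest_spec (P := fun i => hts ε i = (h:ℤ)) hib hi

lemma lam_last (h : ℕ) : ∀ i, lam ε N k h < i → hts ε i ≠ h := by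
  classical
  intro i hlt
  by_cases hib : i ≤ N * (h + k + 1)
  · unfold lam at hlt
    exact Nat.findGreatest_is_greatest (P := fun i => hts ε i = (h:ℤ)) hlt hib
  · intro hcon
    have := visit_bound ε hN hper hD hnod (h:ℤ) i hcon
    simp only [Int.toNat_natCast] at this
    omega

lemma after_lam (h : ℕ) : ∀ j, lam ε N k h < j → (h:ℤ) < hts ε j := by
  intro j hj
  by_contra hcon
  push_neg at hcon
  set m := j + h + 1 with hm
  have h2 : hts ε (m*N) = m * hts ε N := by
    have := hts_mul_per ε hper m 0; simpa [hts_zero] using this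
  have h4 : (m:ℤ) ≤ hts ε (m*N) := by
    rw [h2]
    calc (m:ℤ) = (m:ℤ) * 1 := by ring
    _ ≤ (m:ℤ) * hts ε N := mul_le_mul_of_nonneg_left hD (by positivity)
  have h5 : (h:ℤ) ≤ hts ε (j + (m*N - j)) := by
    have : j + (m*N - j) = m*N := by
      have : j ≤ m*N := by
        calc j ≤ m := by omega
        _ ≤ m * N := by exact Nat.le_mul_of_pos_right m hN
      omega
    rw [this]; omega
  obtain ⟨i, hi1, hi2, hi3⟩ := hts_ivt ε (h:ℤ) (m*N - j) j hcon h5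
  exact lam_last ε hN hper hD hnod h i (by omega) hi3

lemma lam_mono (h : ℕ) : lam ε N k h < lam ε N k (h+1) := by
  by_contra hcon
  push_neg at hcon
  rcases Nat.lt_or_ge (lam ε N k (h+1)) (lam ε N k h) with hlt | hge
  · have := after_lam ε hN hper hD hnod (h+1) _ hlt
    have h2 := lam_spec ε hN hper hD hnod h
    omega
  · have he : lam ε N k (h+1) = lam ε N k h := by omega
    have h1 := lam_spec ε hN hper hD hnod h
    have h2 := lam_spec ε hN hper hD hnod (h+1)
    rw [he] at h2
    omega

lemma lam_step (h : ℕ) : hts ε (lam ε N k h + 1) = (h:ℤ) + 1 := by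
  have h1 := after_lam ε hN hper hD hnod h (lam ε N k h + 1) (by omega)
  have h2 := hts_succ ε (lam ε N k h)
  have h3 := lam_spec ε hN hper hD hnod h
  have h4 := dz_le_one (ε (lam ε N k h))
  omega

lemma band (h : ℕ) (i : ℕ) (h1 : lam ε N k h < i) (h2 : i ≤ lam ε N k (h+1)) :
    (h:ℤ)+1 ≤ hts ε i ∧ hts ε i ≤ (h:ℤ)+1+k := by
  constructor
  · have := after_lam ε hN hper hD hnod h i h1; omega
  · have ha := hnod i (lam ε N k (h+1)) h2
    have hb := lam_spec ε hN hper hD hnod (h+1)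
    push_cast at hb
    omega

variable (v : ℕ → Vt k n)

lemma step_shift (hstep : ∀ i, StepRel (v i) (ε i) (v (i+1))) (h : ℕ) :
    shiftRel (v (lam ε N k h)) (v (lam ε N k h + 1)) := by
  have h1 := lam_step ε hN hper hD hnod h
  have h2 := hts_succ ε (lam ε N k h)
  have h3 := lam_spec ε hN hper hD hnod h
  have hdz : dz (ε (lam ε N k h)) = 1 := by omega
  rcases hstep (lam ε N k h) with ⟨_, hs⟩|⟨hd1,_⟩|⟨hd1,_⟩
  · exact hs
  · omega
  · omega

lemma persist (hstep : ∀ i, StepRel (v i) (ε i) (v (i+1))) (h : ℕ) :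
    ∀ i, lam ε N k h + 1 ≤ i → i ≤ lam ε N k (h+1) →
    ∀ (d : ℕ) (hd : d ≤ k), hts ε i = (h:ℤ) + 1 + d →
    (v i).1 ⟨k - d, by omega⟩ = (v (lam ε N k h + 1)).1 (Fin.last k) := by
  intro i hi1
  induction i, hi1 using Nat.le_induction with
  | base =>
    intro _ d hd hhts
    have hls := lam_step ε hN hper hD hnod h
    have hd0 : d = 0 := by omega
    subst hd0
    have : (⟨k - 0, by omega⟩ : Fin (k+1)) = Fin.last k := by
      apply Fin.ext; simp
    rw [this]
  | succ i hi ih =>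
    intro hle d hd hhts
    have hile : i ≤ lam ε N k (h+1) := by omega
    have hband := band ε hN hper hD hnod h i (by omega) hile
    have hdi : ∃ di : ℕ, di ≤ k ∧ hts ε i = (h:ℤ)+1+di := by
      refine ⟨(hts ε i - ((h:ℤ)+1)).toNat, by omega, by omega⟩
    obtain ⟨di, hdik, hdieq⟩ := hdi
    have hsucc := hts_succ ε i
    rcases hstep i with ⟨hd1, hs⟩|⟨hd1, hs⟩|⟨hd1, hs⟩
    · -- F step
      have hd' : d = di + 1 := by omega
      have hdik1 : di + 1 ≤ k := by omega
      calc (v (i+1)).1 ⟨k - d, by omega⟩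
          = (v (i+1)).1 ((⟨k - di - 1, by omega⟩ : Fin k).castSucc) := by
            apply congrArg; apply Fin.ext; simp [Fin.coe_castSucc]; omega
        _ = (v i).1 ((⟨k - di - 1, by omega⟩ : Fin k).succ) := hs.1 _
        _ = (v i).1 ⟨k - di, by omega⟩ := by
            apply congrArg; apply Fin.ext; simp [Fin.val_succ]; omega
        _ = _ := ih hile di hdik hdieq
    · -- B step
      have hd' : di = d + 1 := by omega
      calc (v (i+1)).1 ⟨k - d, by omega⟩
          = (v (i+1)).1 ((⟨k - di, by omega⟩ : Fin k).succ) := by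
            apply congrArg; apply Fin.ext; simp [Fin.val_succ]; omega
        _ = (v i).1 ((⟨k - di, by omega⟩ : Fin k).castSucc) := (hs.1 _).symm
        _ = (v i).1 ⟨k - di, by omega⟩ := by
            apply congrArg; apply Fin.ext; simp [Fin.coe_castSucc]
        _ = _ := ih hile di hdik hdieq
    · -- stay
      have hd' : d = di := by omega
      subst hd'
      rw [← hs]
      exact ih hile d hd hdieq

lemma beta_grow (hstep : ∀ i, StepRel (v i) (ε i) (v (i+1))) (h : ℕ) :
    (v (lam ε N k h + 1)).1 (Fin.last k) < (v (lam ε N k (h+1) + 1)).1 (Fin.last k) := by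
  have hsh := step_shift ε hN hper hD hnod v hstep (h+1)
  have hmono := lam_mono ε hN hper hD hnod h
  have hp := persist ε hN hper hD hnod v hstep h (lam ε N k (h+1)) (by omega) (le_refl _) 0 (by omega)
    (by have := lam_spec ε hN hper hD hnod (h+1); push_cast at this ⊢; omega)
  have hlast : (⟨k - 0, by omega⟩ : Fin (k+1)) = Fin.last k := by apply Fin.ext; simp
  rw [hlast] at hp
  calc (v (lam ε N k h + 1)).1 (Fin.last k) = (v (lam ε N k (h+1))).1 (Fin.last k) := hp.symm
    _ < (v (lam ε N k (h+1) + 1)).1 (Fin.last k) := hsh.2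

lemma walk_false (hstep : ∀ i, StepRel (v i) (ε i) (v (i+1))) : False := by
  have grow : ∀ h : ℕ, h ≤ ((v (lam ε N k h + 1)).1 (Fin.last k)).val := by
    intro h
    induction h with
    | zero => omega
    | succ h ih =>
      have := beta_grow ε hN hper hD hnod v hstep h
      have : ((v (lam ε N k h + 1)).1 (Fin.last k)).val < ((v (lam ε N k (h+1) + 1)).1 (Fin.last k)).val := this
      omega
  have h1 := grow n
  have h2 := ((v (lam ε N k n + 1)).1 (Fin.last k)).isLt
  omega

end Walk2

/-- contrapositive form : a positively-drifting periodic walk has a big descent -/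
lemma descent_exists {k n N : ℕ} (ε : ℕ → L) (v : ℕ → Vt k n)
    (hstep : ∀ i, StepRel (v i) (ε i) (v (i+1)))
    (hN : 1 ≤ N) (hper : ∀ i, ε (i+N) = ε i) (hD : 1 ≤ hts ε N) :
    ∃ i j : ℕ, i ≤ j ∧ (k:ℤ) + 1 ≤ hts ε i - hts ε j := by
  by_contra hcon
  push_neg at hcon
  exact walk_false ε hN hper hD (fun i j hij => by have := hcon i j hij; omega) v hstep


def flipL (ℓ : L) : L := (ℓ.2, ℓ.1)

lemma dz_flip (ℓ : L) : dz (flipL ℓ) = - dz ℓ := by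
  obtain ⟨a,b⟩ := ℓ; fin_cases a <;> fin_cases b <;> simp [dz, flipL]

def starV {k n : ℕ} (u : Vt k n) : Vt k n :=
  ⟨fun j => (u.1 j.rev).rev, by
    intro a b hab
    rw [Fin.rev_lt_rev]
    exact u.2 (by rw [Fin.rev_lt_rev]; exact hab)⟩

lemma star_shift {k n : ℕ} (u v : Vt k n) (h : shiftRel u v) : shiftRel (starV v) (starV u) := by
  constructor
  · intro j
    show (u.1 (j.castSucc).rev).rev = (v.1 (j.succ).rev).rev
    have e1 : (j.castSucc).rev = (j.rev).succ := by
      apply Fin.ext; simp only [Fin.val_rev, Fin.coe_castSucc, Fin.val_succ]; omega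
    have e2 : (j.succ).rev = (j.rev).castSucc := by
      apply Fin.ext; simp only [Fin.val_rev, Fin.coe_castSucc, Fin.val_succ]; omega
    rw [e1, e2, h.1 j.rev]
  · show (v.1 (Fin.last k).rev).rev < (u.1 (Fin.last k).rev).rev
    rw [Fin.rev_lt_rev]
    have e : (Fin.last k).rev = (0 : Fin (k+1)) := by apply Fin.ext; simp [Fin.val_rev]
    rw [e]
    match k, u, v, h with
    | 0, u, v, h => exact h.2
    | (k+1), u, v, h =>
      have h1 : v.1 (Fin.castSucc 0) = u.1 (Fin.succ 0) := h.1 0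
      have h0 : (Fin.castSucc (0 : Fin (k+1))) = (0 : Fin (k+2)) := by apply Fin.ext; simp
      rw [h0] at h1
      rw [h1]
      exact u.2 (by simp [Fin.lt_def])

lemma star_step {k n : ℕ} (u v : Vt k n) (ℓ : L) (h : StepRel u ℓ v) :
    StepRel (starV u) (flipL ℓ) (starV v) := by
  rcases h with ⟨hd, hs⟩|⟨hd, hs⟩|⟨hd, hs⟩
  · exact Or.inr (Or.inl ⟨by rw [dz_flip, hd], star_shift u v hs⟩)
  · exact Or.inl ⟨by rw [dz_flip, hd]; ring, star_shift v u hs⟩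
  · exact Or.inr (Or.inr ⟨by rw [dz_flip, hd]; ring, by rw [hs]⟩)

/-- snoc vertex -/
def snocV {k n : ℕ} (w : Vt k n) (b : Fin n) (hb : w.1 (Fin.last k) < b) : Vt (k+1) n :=
  ⟨Fin.snoc w.1 b, by
    intro x y hxy
    revert hxy
    refine Fin.lastCases ?_ ?_ y
    · intro hx
      have hxne : x ≠ Fin.last (k+1) := Fin.ne_last_of_lt hx
      obtain ⟨x', rfl⟩ := Fin.exists_castSucc_eq.mpr hxne
      show (Fin.snoc w.1 b : Fin (k+2) → Fin n) _ < (Fin.snoc w.1 b : Fin (k+2) → Fin n) _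
      rw [Fin.snoc_castSucc, Fin.snoc_last]
      exact lt_of_le_of_lt (w.2.monotone (Fin.le_last x')) hb
    · intro y' hx
      have hxne : x ≠ Fin.last (k+1) := Fin.ne_last_of_lt (lt_of_lt_of_le hx (Fin.le_last _))
      obtain ⟨x', rfl⟩ := Fin.exists_castSucc_eq.mpr hxne
      show (Fin.snoc w.1 b : Fin (k+2) → Fin n) _ < (Fin.snoc w.1 b : Fin (k+2) → Fin n) _
      rw [Fin.snoc_castSucc, Fin.snoc_castSucc]
      exact w.2 (Fin.castSucc_lt_castSucc_iff.mp hx)⟩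

lemma snoc_shift {k n : ℕ} (w w' : Vt k n) (hsh : shiftRel w w') (b' : Fin n)
    (hb' : w'.1 (Fin.last k) < b') :
    shiftRel (snocV w (w'.1 (Fin.last k)) hsh.2) (snocV w' b' hb') := by
  constructor
  · intro j
    refine Fin.lastCases ?_ ?_ j
    · show (Fin.snoc w'.1 b' : Fin (k+2) → Fin n) (Fin.castSucc (Fin.last k)) = _
      rw [Fin.snoc_castSucc]
      have : Fin.succ (Fin.last k) = Fin.last (k+1) := by apply Fin.ext; simp
      rw [this]
      show _ = (Fin.snoc w.1 (w'.1 (Fin.last k)) : Fin (k+2) → Fin n) (Fin.last (k+1))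
      rw [Fin.snoc_last]
    · intro j'
      show (Fin.snoc w'.1 b' : Fin (k+2) → Fin n) (Fin.castSucc (Fin.castSucc j')) = (Fin.snoc w.1 (w'.1 (Fin.last k)) : Fin (k+2) → Fin n) (Fin.succ (Fin.castSucc j'))
      rw [Fin.snoc_castSucc, Fin.succ_castSucc, Fin.snoc_castSucc]
      exact hsh.1 j'
  · show (Fin.snoc w.1 (w'.1 (Fin.last k)) : Fin (k+2) → Fin n) (Fin.last (k+1)) < (Fin.snoc w'.1 b' : Fin (k+2) → Fin n) (Fin.last (k+1))
    rw [Fin.snoc_last, Fin.snoc_last]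
    exact hb'

def tower : ℕ → ℕ → ℕ
  | 0, c => c
  | k+1, c => tower k (2^c)

lemma chrom_bound : ∀ (k n : ℕ) (C : Type) (_ : Fintype C) (c : Vt k n → C),
    (∀ u v : Vt k n, shiftRel u v → c u ≠ c v) → n ≤ tower k (Fintype.card C) := by
  intro k
  induction k with
  | zero =>
    intro n C instC c hc
    have hmono : ∀ i : Fin n, StrictMono (fun _ : Fin 1 => i) := by
      intro i a b hab
      have : a = b := Subsingleton.elim a b
      simp [this] at hab
    set ι : Fin n → Vt 0 n := fun i => ⟨fun _ => i, hmono i⟩ with hι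
    have hinj : Function.Injective (fun i => c (ι i)) := by
      intro i j hij
      by_contra hne
      rcases Ne.lt_or_gt hne with h | h
      · exact hc (ι i) (ι j) ⟨fun jj => jj.elim0, h⟩ hij
      · exact hc (ι j) (ι i) ⟨fun jj => jj.elim0, h⟩ hij.symm
    calc n = Fintype.card (Fin n) := by simp
    _ ≤ Fintype.card C := Fintype.card_le_of_injective _ hinj
    _ = tower 0 (Fintype.card C) := rfl
  | succ k ih =>
    intro n C instC c hc
    classical
    set c' : Vt k n → Finset C := fun w =>
      (Finset.univ.filter (fun b => w.1 (Fin.last k) < b)).attach.image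
        (fun b => c (snocV w b.1 (by have := b.2; simp only [Finset.mem_filter] at this; exact this.2))) with hc'
    have hproper : ∀ u v : Vt k n, shiftRel u v → c' u ≠ c' v := by
      intro w w' hsh heq
      have hmem : c (snocV w (w'.1 (Fin.last k)) hsh.2) ∈ c' w := by
        simp only [hc', Finset.mem_image]
        refine ⟨⟨w'.1 (Fin.last k), ?_⟩, Finset.mem_attach _ _, rfl⟩
        simp only [Finset.mem_filter]
        exact ⟨Finset.mem_univ _, hsh.2⟩
      rw [heq] at hmem
      simp only [hc', Finset.mem_image] at hmem
      obtain ⟨⟨bb, hbb⟩, _, hbeq⟩ := hmem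
      simp only [Finset.mem_filter] at hbb
      exact hc _ _ (snoc_shift w w' hsh bb hbb.2) hbeq.symm
    have := ih n (Finset C) inferInstance c' hproper
    rw [Fintype.card_finset] at this
    exact this


lemma hts_ivt_down (ε : ℕ → L) (z : ℤ) : ∀ (d a : ℕ), z ≤ hts ε a → hts ε (a+d) ≤ z →
    ∃ i, a ≤ i ∧ i ≤ a + d ∧ hts ε i = z := by
  intro d
  induction d with
  | zero =>
    intro a h1 h2
    simp only [Nat.add_zero] at h2
    exact ⟨a, le_refl _, by omega, by omega⟩
  | succ d ih =>
    intro a h1 h2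
    by_cases hc : hts ε (a+d) ≤ z
    · obtain ⟨i, hi1, hi2, hi3⟩ := ih a h1 hc
      exact ⟨i, hi1, by omega, hi3⟩
    · have hs := hts_succ ε (a+d)
      have hb := neg_one_le_dz (ε (a+d))
      have h2' : a + (d+1) = a+d+1 := by ring
      rw [h2'] at h2
      refine ⟨a+d+1, by omega, by omega, by omega⟩

/-- descending cut points -/
lemma cuts_down (ε : ℕ → L) (M : ℕ) (i₀ j₀ : ℕ) (hij : i₀ ≤ j₀)
    (hdrop : hts ε j₀ ≤ hts ε i₀ - (M+1)) :
    ∃ q : Fin (M+2) → ℕ, (∀ r r' : Fin (M+2), r < r' → q r < q r') ∧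
      ∀ r : Fin (M+2), hts ε (q r) = hts ε i₀ - r := by
  classical
  have hex : ∀ r : Fin (M+2), ∃ i, i₀ ≤ i ∧ hts ε i = hts ε i₀ - r := by
    intro r
    have hr : (r:ℤ) ≤ M+1 := by
      have := r.isLt; push_cast; omega
    obtain ⟨d, rfl⟩ := Nat.exists_eq_add_of_le hij
    obtain ⟨i, h1, h2, h3⟩ := hts_ivt_down ε (hts ε i₀ - r) d i₀ (by omega) (by omega)
    exact ⟨i, h1, h3⟩
  refine ⟨fun r => Nat.find (hex r), ?_, ?_⟩
  · intro r r' hrr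
    show Nat.find (hex r) < Nat.find (hex r')
    have hfr' := Nat.find_spec (hex r')
    -- crossing between i₀ and q r'
    have hcross : ∃ i, i₀ ≤ i ∧ i ≤ Nat.find (hex r') ∧ hts ε i = hts ε i₀ - r := by
      have h1 : i₀ ≤ Nat.find (hex r') := hfr'.1
      obtain ⟨d, hd⟩ := Nat.exists_eq_add_of_le h1
      rw [hd]
      apply hts_ivt_down ε _ d i₀
      · have : (r:ℤ) ≥ 0 := by positivity
        omega
      · rw [← hd, hfr'.2]
        have : (r:ℤ) < r' := by exact_mod_cast hrr
        omega
    obtain ⟨i, hi1, hi2, hi3⟩ := hcross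
    have hle : Nat.find (hex r) ≤ i := Nat.find_min' (hex r) ⟨hi1, hi3⟩
    have hne : Nat.find (hex r) ≠ Nat.find (hex r') := by
      intro hcon
      have ha := (Nat.find_spec (hex r)).2
      have hb := hfr'.2
      rw [hcon] at ha
      have hv : (r:ℤ) = r' := by omega
      have hv2 : (r:ℕ) = (r':ℕ) := by exact_mod_cast hv
      have : r = r' := Fin.ext hv2
      omega
    omega
  · intro r; exact (Nat.find_spec (hex r)).2

/-- the splice-and-pump contradiction -/
lemma assemble (f : S → L → Set S) {N : ℕ} (ε : ℕ → L) (g : ℕ → S)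
    (hrun : IsRunOn f ε g) (hN : 1 ≤ N)
    (hsafe : ∀ w : List L, w ≠ [] → dsum w = 0 → ∀ a, ¬ Run f w a a)
    (qa qb Tj Tj' En : ℕ)
    (ho1 : qa < qb) (ho2 : qb ≤ Tj) (ho3 : Tj ≤ Tj') (ho4 : Tj' ≤ En)
    (hgEnd : g En = g 0)
    (hpig1 : ∀ x y, Run f (slice ε 0 qb) x y ↔ Run f (slice ε 0 qa) x y)
    (hpig2 : ∀ x y, Run f (slice ε 0 Tj') x y ↔ Run f (slice ε 0 Tj) x y)
    (s r : ℕ)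
    (hbal : dsum (slice ε 0 En) + s * dsum (slice ε qa qb) + r * dsum (slice ε Tj Tj') = 0) :
    False := by
  set A := slice ε 0 qa with hA
  set um := slice ε qa qb with hum
  set B := slice ε qb Tj with hB
  set up := slice ε Tj Tj' with hup
  set C := slice ε Tj' En with hC
  have hsl1 : slice ε 0 qb = A ++ um := slice_split ε 0 qa qb (by omega) (by omega)
  have hsl2 : slice ε 0 Tj = slice ε 0 qb ++ B := slice_split ε 0 qb Tj (by omega) (by omega)
  have hsl3 : slice ε 0 Tj' = slice ε 0 Tj ++ up := slice_split ε 0 Tj Tj' (by omega) (by omega)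
  have hsl4 : slice ε 0 En = slice ε 0 Tj' ++ C := slice_split ε 0 Tj' En (by omega) (by omega)
  have hp1 : ∀ x y, Run f (A ++ um) x y ↔ Run f A x y := by
    intro x y; rw [← hsl1]; exact hpig1 x y
  have umElim : ∀ (X : List L) (x y : S), Run f (A ++ um ++ X) x y ↔ Run f (A ++ X) x y := by
    intro X x y
    have e : A ++ um ++ X = A ++ pow um 1 ++ X := by simp [pow]
    rw [e, run_pump f A um hp1 1 X]
  have hp2 : ∀ x y, Run f (A ++ B ++ up) x y ↔ Run f (A ++ B) x y := by
    intro x y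
    have e1 : A ++ B ++ up = A ++ (B ++ up) := by simp [List.append_assoc]
    have e2 : A ++ um ++ (B ++ up) = slice ε 0 Tj' := by
      rw [hsl3, hsl2, hsl1]; simp [List.append_assoc]
    have e3 : A ++ um ++ B = slice ε 0 Tj := by
      rw [hsl2, hsl1]
    constructor
    · intro h
      rw [e1] at h
      have h2 := (umElim (B ++ up) x y).2 h
      rw [e2] at h2
      have h3 := (hpig2 x y).1 h2
      rw [← e3] at h3
      exact (umElim B x y).1 h3
    · intro h
      have h2 := (umElim B x y).2 h
      rw [e3] at h2
      have h3 := (hpig2 x y).2 h2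
      rw [← e2] at h3
      have h4 := (umElim (B ++ up) x y).1 h3
      rw [← e1] at h4
      exact h4
  -- the full word runs
  have hfull : Run f (slice ε 0 En) (g 0) (g 0) := by
    have := slice_run f ε g hrun 0 En
    simp only [Nat.zero_add] at this
    rw [hgEnd] at this
    exact this
  have e6 : slice ε 0 En = A ++ pow um 1 ++ (B ++ (pow up 1 ++ C)) := by
    rw [hsl4, hsl3, hsl2, hsl1]; simp [pow, List.append_assoc]
  have e7 : A ++ (B ++ (pow up 1 ++ C)) = A ++ B ++ pow up 1 ++ C := by
    simp [List.append_assoc]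
  have e8 : A ++ (B ++ (pow up (r+1) ++ C)) = A ++ B ++ pow up (r+1) ++ C := by
    simp [List.append_assoc]
  rw [e6, run_pump f A um hp1 1 _, e7, run_pump f (A ++ B) up hp2 1 C] at hfull
  -- hfull : Run f (A ++ B ++ C) (g 0) (g 0)
  set W := A ++ pow um (s+1) ++ (B ++ (pow up (r+1) ++ C)) with hW
  have hWrun : Run f W (g 0) (g 0) := by
    rw [hW, run_pump f A um hp1 (s+1) _, e8, run_pump f (A ++ B) up hp2 (r+1) C]
    exact hfull
  have hdW : dsum W = 0 := by
    have hA' : dsum (slice ε 0 En) = dsum A + dsum um + dsum B + dsum up + dsum C := by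
      rw [hsl4, hsl3, hsl2, hsl1]
      simp [dsum_append]
      ring
    have h1 : dsum (slice ε qa qb) = dsum um := rfl
    have h2 : dsum (slice ε Tj Tj') = dsum up := rfl
    rw [h1, h2, hA'] at hbal
    rw [hW]
    simp only [dsum_append, dsum_pow]
    push_cast
    linarith
  have hum_ne : um ≠ [] := by
    intro h
    have hul := slice_length ε qa qb
    rw [hum] at h
    rw [h] at hul
    simp at hul
    omega
  have hWne : W ≠ [] := by
    intro hcon
    rw [hW] at hcon
    obtain ⟨h2, _⟩ := List.append_eq_nil_iff.mp hcon
    obtain ⟨_, h3⟩ := List.append_eq_nil_iff.mp h2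
    have : um ++ pow um s = [] := by simpa [pow] using h3
    exact hum_ne (List.append_eq_nil_iff.mp this).1
  exact hsafe W hWne hdW (g 0) hWrun


lemma hts_flip (ε : ℕ → L) (i : ℕ) : hts (fun j => flipL (ε j)) i = - hts ε i := by
  induction i with
  | zero => simp [hts_zero]
  | succ i ih => rw [hts_succ, hts_succ, ih, dz_flip]; ring

lemma cuts_up (ε : ℕ → L) (M : ℕ) (i₀ j₀ : ℕ) (hij : i₀ ≤ j₀)
    (hrise : hts ε i₀ + (M+1) ≤ hts ε j₀) :
    ∃ q : Fin (M+2) → ℕ, (∀ r r' : Fin (M+2), r < r' → q r < q r') ∧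
      ∀ r : Fin (M+2), hts ε (q r) = hts ε i₀ + r := by
  obtain ⟨q, hmono, hval⟩ := cuts_down (fun j => flipL (ε j)) M i₀ j₀ hij
    (by rw [hts_flip, hts_flip]; omega)
  refine ⟨q, hmono, fun r => ?_⟩
  have := hval r
  rw [hts_flip, hts_flip] at this
  omega

/-- given a pumpable strictly-unbalancing pair, finish via boundary cuts -/
lemma boundary_finish (f : S → L → Set S) [Fintype S] [DecidableEq S]
    {k N : ℕ} (hN : 1 ≤ N)
    (hk : Fintype.card (S → S → Bool) = k)
    (hsafe : ∀ w : List L, w ≠ [] → dsum w = 0 → ∀ a, ¬ Run f w a a)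
    (ε : ℕ → L) (g : ℕ → S)
    (hrun : IsRunOn f ε g)
    (hper : ∀ i, ε (i+N) = ε i) (hgper : ∀ i, g (i+N) = g i)
    (hDne : hts ε N ≠ 0)
    (qa qb : ℕ) (hqab : qa < qb)
    (hpig1 : ∀ x y, Run f (slice ε 0 qb) x y ↔ Run f (slice ε 0 qa) x y)
    (δm : ℕ) (hδ : 1 ≤ δm)
    (hdu1 : dsum (slice ε qa qb) * hts ε N = -(δm:ℤ) * |hts ε N|) : False := by
  classical
  set Dn := hts ε N with hDn
  have hgmul : ∀ m, g (m*N) = g 0 := by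
    intro m
    induction m with
    | zero => simp
    | succ m ih => rw [show (m+1)*N = m*N + N by ring, hgper, ih]
  have htsmul : ∀ m : ℕ, hts ε (m*N) = m * Dn := by
    intro m
    have := hts_mul_per ε hper m 0
    simpa [hts_zero] using this
  set REL : List CTM.L → (S → S → Bool) := fun w x y => decide (Run f w x y) with hREL
  have hRELiff : ∀ w w', REL w = REL w' → ∀ x y, (Run f w x y ↔ Run f w' x y) := by
    intro w w' h x y
    have := congrFun (congrFun h x) y
    simpa [hREL] using this
  -- boundary cuts
  set T : ℕ → ℕ := fun j => (qb + 1 + j) * N with hT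
  have hTval : ∀ j, hts ε (T j) = (qb + 1 + j) * Dn := fun j => htsmul _
  obtain ⟨a0, b0, hab0, heq0⟩ := Fintype.exists_ne_map_eq_of_card_lt
    (fun j : Fin (k+1) => REL (slice ε 0 (T j.val))) (by simp [hk])
  have key : ∀ a b : Fin (k+1), a < b →
      REL (slice ε 0 (T a.val)) = REL (slice ε 0 (T b.val)) → False := by
    intro a b hab habeq
    set j21 := b.val - a.val with hj21
    have hj211 : 1 ≤ j21 := by
      have : a.val < b.val := hab
      omega
    have hTab : T a.val < T b.val := by
      simp only [hT]
      have : qb + 1 + a.val < qb + 1 + b.val := by have : a.val < b.val := hab; omega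
      exact (Nat.mul_lt_mul_right hN).mpr this
    set K₀ := T b.val + 1 with hK₀
    set En := (δm * K₀) * N with hEn
    have hEnge : T b.val ≤ En := by
      have h1 : K₀ ≤ δm * K₀ := Nat.le_mul_of_pos_left K₀ hδ
      have h2 : δm * K₀ ≤ (δm * K₀) * N := Nat.le_mul_of_pos_right _ hN
      omega
    set Dabs : ℕ := Dn.natAbs with hDabs
    have hDabsZ : (Dabs:ℤ) = |Dn| := Int.abs_eq_natAbs Dn ▸ rfl
    set s := Dabs * (K₀ + j21) with hs
    -- the three dsum values
    have v1 : dsum (slice ε 0 En) = ((δm * K₀ : ℕ) : ℤ) * Dn := by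
      rw [dsum_slice ε 0 En (by omega), hts_zero, hEn, htsmul]
      ring
    have v2 : dsum (slice ε (T a.val) (T b.val)) = (j21:ℤ) * Dn := by
      have hab' : a.val ≤ b.val := le_of_lt hab
      rw [dsum_slice ε _ _ (le_of_lt hTab), hTval, hTval, hj21, Nat.cast_sub hab']
      push_cast
      ring
    have hqbT : qb ≤ T a.val := by
      simp only [hT]
      calc qb ≤ qb + 1 + a.val := by omega
      _ ≤ (qb + 1 + a.val) * N := Nat.le_mul_of_pos_right _ hN
    -- balance
    have hbal : dsum (slice ε 0 En) + s * dsum (slice ε qa qb)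
        + δm * dsum (slice ε (T a.val) (T b.val)) = 0 := by
      rw [v1, v2]
      have habs2 : (Dabs:ℤ) * Dabs = Dn * Dn := by
        rw [hDabsZ]; exact abs_mul_abs_self Dn
      have hE : (((δm * K₀ : ℕ) : ℤ) * Dn + (s:ℤ) * dsum (slice ε qa qb) + (δm:ℤ) * ((j21:ℤ) * Dn)) * Dn
          = 0 := by
        have e1 : (s:ℤ) = (Dabs:ℤ) * ((K₀:ℤ) + (j21:ℤ)) := by
          rw [hs]; push_cast; ring
        have expand : (((δm * K₀ : ℕ) : ℤ) * Dn + (s:ℤ) * dsum (slice ε qa qb) + (δm:ℤ) * ((j21:ℤ) * Dn)) * Dn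
            = ((δm:ℤ) * K₀) * (Dn * Dn) + (s:ℤ) * (dsum (slice ε qa qb) * Dn) + ((δm:ℤ) * j21) * (Dn * Dn) := by
          push_cast
          ring
        rw [expand, hdu1, e1]
        have : ((Dabs:ℤ) * ((K₀:ℤ) + (j21:ℤ))) * (-(δm:ℤ) * |Dn|)
            = -((δm:ℤ) * ((K₀:ℤ) + (j21:ℤ))) * ((Dabs:ℤ) * |Dn|) := by ring
        rw [this, ← hDabsZ, habs2]
        ring
      rcases mul_eq_zero.mp hE with h | h
      · exact h
      · exact absurd h hDne
    exact assemble f ε g hrun hN hsafe qa qb (T a.val) (T b.val) En hqab hqbT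
      (le_of_lt hTab) hEnge (hEn ▸ hgmul (δm * K₀)) hpig1
      (hRELiff _ _ habeq.symm) s δm hbal
  rcases hab0.lt_or_gt with h | h
  · exact key a0 b0 h heq0
  · exact key b0 a0 h heq0.symm

/-- main goodness: a periodic machine walk on the shift graph is impossible -/
lemma walk_impossible (f : S → L → Set S) [Fintype S] [DecidableEq S]
    {k n N : ℕ} (hN : 1 ≤ N)
    (hk : Fintype.card (S → S → Bool) = k)
    (hsafe : ∀ w : List L, w ≠ [] → dsum w = 0 → ∀ a, ¬ Run f w a a)
    (vv : ℕ → Vt k n) (ε : ℕ → L) (g : ℕ → S)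
    (hstep : ∀ i, StepRel (vv i) (ε i) (vv (i+1)))
    (hrun : IsRunOn f ε g)
    (hper : ∀ i, ε (i+N) = ε i) (hgper : ∀ i, g (i+N) = g i) : False := by
  classical
  set REL : List CTM.L → (S → S → Bool) := fun w x y => decide (Run f w x y) with hREL
  have hRELiff : ∀ w w', REL w = REL w' → ∀ x y, (Run f w x y ↔ Run f w' x y) := by
    intro w w' h x y
    have := congrFun (congrFun h x) y
    simpa [hREL] using this
  rcases lt_trichotomy (hts ε N) 0 with hDlt | hDeq | hDgt
  · -- D < 0 : use the star walk to find an ascent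
    obtain ⟨i₀, j₀, hij, hdrop⟩ := descent_exists (fun i => flipL (ε i)) (fun i => starV (vv i))
      (fun i => star_step _ _ _ (hstep i)) hN (fun i => by simp [hper i]) (by rw [hts_flip]; omega)
    rw [hts_flip, hts_flip] at hdrop
    obtain ⟨q, hqmono, hqval⟩ := cuts_up ε k i₀ j₀ hij (by push_cast at hdrop ⊢; omega)
    obtain ⟨r1, r2, hr12, hreq⟩ := Fintype.exists_ne_map_eq_of_card_lt
      (fun r : Fin (k+1) => REL (slice ε 0 (q (Fin.castSucc r)))) (by simp [hk])
    have key : ∀ a b : Fin (k+1), a < b →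
        REL (slice ε 0 (q (Fin.castSucc a))) = REL (slice ε 0 (q (Fin.castSucc b))) → False := by
      intro a b hab habeq
      have hqab : q (Fin.castSucc a) < q (Fin.castSucc b) := hqmono _ _ (by simpa using hab)
      set δm := b.val - a.val with hδm
      have hδ1 : 1 ≤ δm := by have : a.val < b.val := hab; omega
      refine boundary_finish f hN hk hsafe ε g hrun hper hgper (by omega)
        (q (Fin.castSucc a)) (q (Fin.castSucc b)) hqab (hRELiff _ _ habeq.symm) δm hδ1 ?_
      have hv1 := hqval (Fin.castSucc a)
      have hv2 := hqval (Fin.castSucc b)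
      have hdu : dsum (slice ε (q (Fin.castSucc a)) (q (Fin.castSucc b))) = (δm:ℤ) := by
        rw [dsum_slice ε _ _ (le_of_lt hqab), hv1, hv2, hδm,
          Nat.cast_sub (le_of_lt (show a.val < b.val from hab))]
        simp only [Fin.coe_castSucc]
        push_cast
        ring
      rw [hdu, abs_of_neg hDlt]
      all_goals ring
    rcases hr12.lt_or_gt with h | h
    · exact key r1 r2 h hreq
    · exact key r2 r1 h hreq.symm
  · -- D = 0 : balanced period
    have hrunN : Run f (slice ε 0 N) (g 0) (g N) := by
      have := slice_run f ε g hrun 0 N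
      simpa using this
    have hgN : g N = g 0 := by have := hgper 0; simpa using this
    rw [hgN] at hrunN
    refine hsafe (slice ε 0 N) ?_ ?_ (g 0) hrunN
    · intro hcon
      have hl := slice_length ε 0 N
      rw [hcon] at hl
      simp at hl
      omega
    · rw [dsum_slice ε 0 N (by omega), hts_zero]
      omega
  · -- D > 0
    obtain ⟨i₀, j₀, hij, hdrop⟩ := descent_exists ε vv hstep hN hper (by omega)
    obtain ⟨q, hqmono, hqval⟩ := cuts_down ε k i₀ j₀ hij (by push_cast at hdrop ⊢; omega)
    obtain ⟨r1, r2, hr12, hreq⟩ := Fintype.exists_ne_map_eq_of_card_lt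
      (fun r : Fin (k+1) => REL (slice ε 0 (q (Fin.castSucc r)))) (by simp [hk])
    have key : ∀ a b : Fin (k+1), a < b →
        REL (slice ε 0 (q (Fin.castSucc a))) = REL (slice ε 0 (q (Fin.castSucc b))) → False := by
      intro a b hab habeq
      have hqab : q (Fin.castSucc a) < q (Fin.castSucc b) := hqmono _ _ (by simpa using hab)
      set δm := b.val - a.val with hδm
      have hδ1 : 1 ≤ δm := by have : a.val < b.val := hab; omega
      refine boundary_finish f hN hk hsafe ε g hrun hper hgper (by omega)
        (q (Fin.castSucc a)) (q (Fin.castSucc b)) hqab (hRELiff _ _ habeq.symm) δm hδ1 ?_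
      have hv1 := hqval (Fin.castSucc a)
      have hv2 := hqval (Fin.castSucc b)
      have hdu : dsum (slice ε (q (Fin.castSucc a)) (q (Fin.castSucc b))) = -(δm:ℤ) := by
        rw [dsum_slice ε _ _ (le_of_lt hqab), hv1, hv2, hδm,
          Nat.cast_sub (le_of_lt (show a.val < b.val from hab))]
        simp only [Fin.coe_castSucc]
        push_cast
        ring
      rw [hdu, abs_of_pos hDgt]
      all_goals ring
    rcases hr12.lt_or_gt with h | h
    · exact key r1 r2 h hreq
    · exact key r2 r1 h hreq.symm


lemma shift_graph_good (f : S → L → Set S) [Fintype S] [DecidableEq S] {k n : ℕ}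
    (hk : Fintype.card (S → S → Bool) = k)
    (hsafe : ∀ w : List L, w ≠ [] → dsum w = 0 → ∀ a, ¬ Run f w a a) :
    ¬ HasMBadCycle {e : Fin 2 → Vt k n | ∃ u v : Vt k n, shiftRel u v ∧ e = ![u, v]}
        f (Set.diagonal S) := by
  rintro ⟨N, v, e, s, hN, hclose, hE, htr, hdiag⟩
  have hNpos : 0 < N := hN
  have hdiag' : s (Fin.last N) = s 0 := (Set.mem_diagonal_iff.mp hdiag).symm
  set idx : ℕ → Fin N := fun i => ⟨i % N, Nat.mod_lt i hNpos⟩ with hidx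
  have hmod1 : ∀ i : ℕ, (i+1) % N = (i % N + 1) % N := by
    intro i
    conv_lhs => rw [show i + 1 = (i % N + 1) + N * (i / N) by
      have := Nat.div_add_mod i N; omega]
    exact Nat.add_mul_mod_self_left _ _ _
  have hch : ∀ j : Fin N, ∃ ℓ : L, (e j) ℓ.1 = v j.castSucc ∧ (e j) ℓ.2 = v j.succ ∧
      s j.succ ∈ f (s j.castSucc) ℓ := by
    intro j
    obtain ⟨a, b, h1, h2, h3⟩ := htr j
    exact ⟨(a,b), h1, h2, h3⟩
  choose F hF1 hF2 hF3 using hch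
  set vv : ℕ → Vt k n := fun i => v (idx i).castSucc with hvv
  set gg : ℕ → S := fun i => s (idx i).castSucc with hgg
  set ε : ℕ → L := fun i => F (idx i) with hε
  have hidx_succ : ∀ i : ℕ, i % N + 1 < N → (idx i).succ = (idx (i+1)).castSucc := by
    intro i hc
    apply Fin.ext
    simp only [Fin.val_succ, Fin.coe_castSucc, hidx]
    rw [hmod1 i, Nat.mod_eq_of_lt hc]
  have hidx_wrap : ∀ i : ℕ, ¬ (i % N + 1 < N) →
      (idx i).succ = Fin.last N ∧ (idx (i+1)).castSucc = (0 : Fin (N+1)) := by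
    intro i hc
    have hlt : i % N < N := Nat.mod_lt i hNpos
    have hmeq : i % N + 1 = N := by omega
    constructor
    · apply Fin.ext
      simp only [Fin.val_succ, Fin.val_last, hidx]
      omega
    · apply Fin.ext
      simp only [Fin.coe_castSucc, Fin.val_zero, hidx]
      rw [hmod1 i, hmeq, Nat.mod_self]
  have hsucc_v : ∀ i : ℕ, v (idx i).succ = vv (i+1) := by
    intro i
    by_cases hc : i % N + 1 < N
    · rw [hidx_succ i hc]
    · obtain ⟨h1, h2⟩ := hidx_wrap i hc
      rw [h1, hclose]
      show v 0 = v (idx (i+1)).castSucc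
      rw [h2]
  have hsucc_s : ∀ i : ℕ, s (idx i).succ = gg (i+1) := by
    intro i
    by_cases hc : i % N + 1 < N
    · rw [hidx_succ i hc]
    · obtain ⟨h1, h2⟩ := hidx_wrap i hc
      rw [h1, hdiag']
      show s 0 = s (idx (i+1)).castSucc
      rw [h2]
  have hstep : ∀ i, StepRel (vv i) (ε i) (vv (i+1)) := by
    intro i
    obtain ⟨u, w, hsh, heq⟩ := hE (idx i)
    have ha := hF1 (idx i)
    have hb := hF2 (idx i)
    rw [heq] at ha hb
    rw [hsucc_v i] at hb
    have hεi : ε i = F (idx i) := rfl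
    rcases dz_cases (F (idx i)) with ⟨hd, hℓ⟩|⟨hd,hℓ⟩|⟨hd,hℓ⟩|⟨hd,hℓ⟩ <;>
      rw [hℓ] at ha hb <;>
      simp only [Matrix.cons_val_zero, Matrix.cons_val_one, Matrix.head_cons] at ha hb
    · have ha' : u = vv i := ha
      have hb' : w = vv (i+1) := hb
      exact Or.inl ⟨by rw [hεi, hd], by rw [← ha', ← hb']; exact hsh⟩
    · have ha' : w = vv i := ha
      have hb' : u = vv (i+1) := hb
      exact Or.inr (Or.inl ⟨by rw [hεi, hd], by rw [← ha', ← hb']; exact hsh⟩)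
    · have ha' : u = vv i := ha
      have hb' : u = vv (i+1) := hb
      exact Or.inr (Or.inr ⟨by rw [hεi, hd], by rw [← ha', ← hb']⟩)
    · have ha' : w = vv i := ha
      have hb' : w = vv (i+1) := hb
      exact Or.inr (Or.inr ⟨by rw [hεi, hd], by rw [← ha', ← hb']⟩)
  have hrun : IsRunOn f ε gg := by
    intro i
    have h3 := hF3 (idx i)
    rw [hsucc_s i] at h3
    exact h3
  have hper : ∀ i, ε (i+N) = ε i := by
    intro i
    have : idx (i+N) = idx i := Fin.ext (by simp [hidx, Nat.add_mod_right])
    show F (idx (i+N)) = F (idx i)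
    rw [this]
  have hgper : ∀ i, gg (i+N) = gg i := by
    intro i
    have : idx (i+N) = idx i := Fin.ext (by simp [hidx, Nat.add_mod_right])
    show s (idx (i+N)).castSucc = s (idx i).castSucc
    rw [this]
  exact walk_impossible f hN hk hsafe vv ε gg hstep hrun hper hgper


/-- forward direction -/
lemma forward_dir {S : Type} [Fintype S] (f : S → Fin 2 × Fin 2 → Set S)
    (hL : ∀ m : ℕ, ∃ (V : Type) (_ : Fintype V) (E : Set (Fin 2 → V)),
        IsHypergraph E ∧ ¬ HasMBadCycle E f (Set.diagonal S) ∧ ¬ Colorable E m) :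
    ∀ n : ℕ, 1 ≤ n → ¬ HasMBadCycle (dirPath n) f (Set.diagonal S) := by
  classical
  intro n hn hbad
  obtain ⟨V, instV, E, hHyp, hGood, hNC⟩ := hL n
  set Estep : V → V → Prop := fun u w => ∃ ed ∈ E, ed 0 = u ∧ ed 1 = w with hEstep
  set P : ℕ → V → Prop := fun kk u => ∃ g0 : ℕ → V, g0 kk = u ∧ ∀ i < kk, Estep (g0 i) (g0 (i+1))
    with hP
  by_cases hw : ∃ u, P n u
  · -- lift the bad path-cycle into E along the walk
    obtain ⟨u, g0, hg0, hsteps⟩ := hw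
    have hch : ∀ i : Fin n, ∃ ed ∈ E, ed 0 = g0 i.val ∧ ed 1 = g0 (i.val+1) :=
      fun i => hsteps i.val i.isLt
    choose ED hED1 hED2 hED3 using hch
    obtain ⟨Np, pv, pe, ps, hp0, hpc, hpE, hptr, hpd⟩ := hbad
    have hJ : ∀ i : Fin Np, ∃ j : Fin n, pe i = ![j.castSucc, j.succ] := fun i => hpE i
    choose J hJeq using hJ
    have hkey : ∀ (i : Fin Np) (x : Fin 2), ED (J i) x = g0 ((pe i x).val) := by
      intro i x
      fin_cases x
      · show ED (J i) 0 = g0 ((pe i 0).val)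
        rw [hED2 (J i)]
        have h : (pe i) 0 = (J i).castSucc := by rw [hJeq i]; simp
        rw [h]
        simp
      · show ED (J i) 1 = g0 ((pe i 1).val)
        rw [hED3 (J i)]
        have h : (pe i) 1 = (J i).succ := by rw [hJeq i]; simp
        rw [h]
        simp [Fin.val_succ]
    refine hGood ⟨Np, fun i => g0 (pv i).val, fun i => ED (J i), ps, hp0, ?_, ?_, ?_, hpd⟩
    · show g0 (pv (Fin.last Np)).val = g0 (pv 0).val
      rw [hpc]
    · intro i; exact hED1 (J i)
    · intro i
      obtain ⟨a, b, h1, h2, h3⟩ := hptr i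
      refine ⟨a, b, ?_, ?_, h3⟩
      · show ED (J i) a = g0 (pv i.castSucc).val
        rw [hkey i a, h1]
      · show ED (J i) b = g0 (pv i.succ).val
        rw [hkey i b, h2]
  · -- no long walk: color by longest-walk length
    push_neg at hw
    have hP0 : ∀ u, P 0 u := by
      intro u
      exact ⟨fun _ => u, rfl, by intro i hi; omega⟩
    have hPles : ∀ u, Nat.findGreatest (fun kk => P kk u) (n-1) < n := by
      intro u
      have := Nat.findGreatest_le (P := fun kk => P kk u) (n-1)
      omega
    set c : V → Fin n := fun u => ⟨Nat.findGreatest (fun kk => P kk u) (n-1), hPles u⟩ with hc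
    refine hNC ⟨c, ?_⟩
    intro ed hed
    refine ⟨0, 1, ?_⟩
    set u := ed 0 with hu
    set w := ed 1 with hww
    intro hcon
    -- c u = c w
    have hcu : P (c u).val u := by
      show (fun kk => P kk u) (Nat.findGreatest (fun kk => P kk u) (n-1))
      exact Nat.findGreatest_spec (P := fun kk => P kk u) (m := 0) (by omega) (hP0 u)
    -- extend walk by one step
    obtain ⟨g0, hg0, hst⟩ := hcu
    have hPsucc : P ((c u).val + 1) w := by
      refine ⟨fun i => if i < (c u).val + 1 then g0 i else w, by simp, ?_⟩
      intro i hi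
      by_cases hii : i + 1 < (c u).val + 1
      · simp only [if_pos (by omega : i < (c u).val + 1), if_pos hii]
        exact hst i (by omega)
      · have : i = (c u).val := by omega
        subst this
        simp only [if_pos (by omega : (c u).val < (c u).val + 1), if_neg hii]
        rw [hg0]
        exact ⟨ed, hed, rfl, rfl⟩
    by_cases hle : (c u).val + 1 ≤ n - 1
    · have h1 := Nat.le_findGreatest (P := fun kk => P kk w) hle hPsucc
      have : (c u).val < (c w).val := by
        have hh : (c w).val = Nat.findGreatest (fun kk => P kk w) (n-1) := rfl
        omega
      rw [hcon] at this
      omega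
    · -- then P n w, contradiction
      have : (c u).val + 1 = n := by
        have := hPles u
        omega
      rw [this] at hPsucc
      exact hw w hPsucc

lemma backward_dir {S : Type} [Fintype S] (f : S → Fin 2 × Fin 2 → Set S)
    (hR : ∀ n : ℕ, 1 ≤ n → ¬ HasMBadCycle (dirPath n) f (Set.diagonal S)) :
    ∀ m : ℕ, ∃ (V : Type) (_ : Fintype V) (E : Set (Fin 2 → V)),
        IsHypergraph E ∧ ¬ HasMBadCycle E f (Set.diagonal S) ∧ ¬ Colorable E m := by
  classical
  intro m
  haveI : DecidableEq S := Classical.decEq S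
  set k := Fintype.card (S → S → Bool) with hk
  set n := tower k m + 1 with hn
  haveI : Fintype (Vt k n) := by
    unfold Vt
    exact Subtype.fintype _
  have hsafe : ∀ w : List L, w ≠ [] → dsum w = 0 → ∀ a, ¬ Run (fun s ℓ => f s ℓ) w a a :=
    fun w hw hb a hr => bal_safe f hR w hw hb a hr
  refine ⟨Vt k n, inferInstance, {e | ∃ u v : Vt k n, shiftRel u v ∧ e = ![u, v]}, ?_, ?_, ?_⟩
  · rintro e ⟨u, w, hsh, rfl⟩
    have hne : u ≠ w := by
      intro h
      have := hsh.2
      rw [h] at this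
      exact lt_irrefl _ this
    intro i j hij
    fin_cases i <;> fin_cases j
    · rfl
    · have h : u = w := by simpa using hij
      exact absurd h hne
    · have h : w = u := by simpa using hij
      exact absurd h.symm hne
    · rfl
  · exact shift_graph_good f rfl hsafe
  · rintro ⟨c, hc⟩
    have hproper : ∀ u w : Vt k n, shiftRel u w → c u ≠ c w := by
      intro u w hsh hcc
      obtain ⟨i, j, hij⟩ := hc ![u, w] ⟨u, w, hsh, rfl⟩
      apply hij
      fin_cases i <;> fin_cases j <;> simp [hcc]
    have hb := chrom_bound k n (Fin m) inferInstance c hproper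
    rw [Fintype.card_fin] at hb
    omega


end CTM

/-- Let `M = (S, f, Δ_S)` be a (possibly non-deterministic)
cycling 2-machine.  There exist `M`-good digraphs of arbitrarily large
chromatic number iff the directed path `P_n` is `M`-good for every `n ≥ 1`. -/
theorem cycling_two_machine_unbounded_chromatic_iff_paths_good
    {S : Type} [Fintype S] (f : S → Fin 2 × Fin 2 → Set S) :
    (∀ m : ℕ, ∃ (V : Type) (_ : Fintype V) (E : Set (Fin 2 → V)),
        IsHypergraph E ∧ ¬ HasMBadCycle E f (Set.diagonal S) ∧ ¬ Colorable E m) ↔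
    (∀ n : ℕ, 1 ≤ n → ¬ HasMBadCycle (dirPath n) f (Set.diagonal S)) :=
  ⟨fun hL => CTM.forward_dir f hL, fun hR => CTM.backward_dir f hR⟩
end

section
/- Let M = (S, f, Δ_S) be a cycling 2-machine. Let G_M be the weighted directed multigraph on vertex set S which, for each s, t ∈ S and i, j ∈ {1,2} with t ∈ f(s,(i,j)), has an edge from s to t of weight j − i. Then there exists an M-compatible order on S × [2] if and only if G_M has no closed directed walk of positive length whose total weight is 0. -/
namespace CyclingMachine

variable {S : Type}

abbrev V (S : Type) := S × Fin 2

def wtE (e : V S × V S) : ℤ := ((e.2.2.val : ℤ) - (e.1.2.val : ℤ))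

def wt (L : List (V S × V S)) : ℤ := (L.map wtE).sum

@[simp] lemma wt_nil : wt ([] : List (V S × V S)) = 0 := rfl

@[simp] lemma wt_cons (e : V S × V S) (L : List (V S × V S)) :
    wt (e :: L) = wtE e + wt L := by simp [wt]

lemma wt_append (L₁ L₂ : List (V S × V S)) : wt (L₁ ++ L₂) = wt L₁ + wt L₂ := by
  simp [wt]

lemma wtE_bounds (e : V S × V S) : -1 ≤ wtE e ∧ wtE e ≤ 1 := by
  obtain ⟨⟨u, a⟩, ⟨v, b⟩⟩ := e
  have ha := a.isLt
  have hb := b.isLt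
  simp only [wtE]
  omega

def Chained : S → List (V S × V S) → S → Prop
  | s, [], t => s = t
  | s, e :: L, t => e.1.1 = s ∧ Chained e.2.1 L t

lemma chained_append {L₁ L₂ : List (V S × V S)} {s u t : S}
    (h₁ : Chained s L₁ u) (h₂ : Chained u L₂ t) : Chained s (L₁ ++ L₂) t := by
  induction L₁ generalizing s with
  | nil =>
      have : s = u := h₁
      rw [this]; exact h₂
  | cons e L ih => exact ⟨h₁.1, ih h₁.2⟩

lemma chained_split {L₁ L₂ : List (V S × V S)} {s t : S}
    (h : Chained s (L₁ ++ L₂) t) : ∃ u, Chained s L₁ u ∧ Chained u L₂ t := by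
  induction L₁ generalizing s with
  | nil => exact ⟨s, rfl, h⟩
  | cons e L ih =>
      obtain ⟨u, h1, h2⟩ := ih h.2
      exact ⟨u, ⟨h.1, h1⟩, h2⟩

inductive Cl (B : V S → V S → Prop) : V S → V S → Prop
  | base {p q} : B p q → Cl B p q
  | trans {p q r} : Cl B p q → Cl B q r → Cl B p r
  | mirror (s t : S) (c c' : Fin 2) : Cl B (s, c) (t, c) → Cl B (s, c') (t, c')

lemma cl_subset {B Q : V S → V S → Prop}
    (hb : ∀ p q, B p q → Q p q)
    (ht : ∀ p q r, Q p q → Q q r → Q p r)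
    (hm : ∀ (s t : S) (c c' : Fin 2), Q (s, c) (t, c) → Q (s, c') (t, c')) :
    ∀ p q, Cl B p q → Q p q := by
  intro p q h
  induction h with
  | base h => exact hb _ _ h
  | trans h1 h2 ih1 ih2 => exact ht _ _ _ ih1 ih2
  | mirror s t c c' h ih => exact hm s t c c' ih

lemma cl_to_walk {B : V S → V S → Prop} {p q : V S} (h : Cl B p q) :
    ∃ L, L ≠ [] ∧ (∀ e ∈ L, B e.1 e.2) ∧ Chained p.1 L q.1 ∧
      wt L = (q.2.val : ℤ) - (p.2.val : ℤ) := by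
  induction h with
  | @base p q h =>
      refine ⟨[(p, q)], by simp, by simpa using h, ⟨rfl, rfl⟩, by simp [wtE]⟩
  | @trans p q r h1 h2 ih1 ih2 =>
      obtain ⟨L₁, hn1, hB1, hc1, hw1⟩ := ih1
      obtain ⟨L₂, hn2, hB2, hc2, hw2⟩ := ih2
      refine ⟨L₁ ++ L₂, by simp [hn1], ?_, chained_append hc1 hc2, ?_⟩
      · intro e he
        rcases List.mem_append.mp he with h | h
        · exact hB1 e h
        · exact hB2 e h
      · rw [wt_append, hw1, hw2]; ring
  | mirror s t c c' h ih =>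
      obtain ⟨L, hn, hB, hc, hw⟩ := ih
      refine ⟨L, hn, hB, hc, ?_⟩
      have h0 : wt L = 0 := by simpa using hw
      simpa using h0


lemma single_edge {B : V S → V S → Prop} {e : V S × V S} (hB : B e.1 e.2) (i j : Fin 2)
    (h : (j.val : ℤ) - (i.val : ℤ) = wtE e) : Cl B (e.1.1, i) (e.2.1, j) := by
  obtain ⟨⟨u, a⟩, ⟨v, b⟩⟩ := e
  simp only [wtE] at h
  have ha := a.isLt; have hb := b.isLt; have hi := i.isLt; have hj := j.isLt
  rcases (by omega : (i.val = a.val ∧ j.val = b.val) ∨ (i.val = j.val ∧ a.val = b.val)) with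
    ⟨h1, h2⟩ | ⟨h1, h2⟩
  · have hia : i = a := Fin.ext h1
    have hjb : j = b := Fin.ext h2
    subst hia; subst hjb
    exact Cl.base hB
  · have hij : i = j := Fin.ext h1
    have hab : a = b := Fin.ext h2
    subst hij; subst hab
    exact Cl.mirror u v a i (Cl.base hB)

lemma wt_take_succ (L : List (V S × V S)) (l : ℕ) (h : l < L.length) :
    wt (L.take (l + 1)) = wt (L.take l) + wtE (L.get ⟨l, h⟩) := by
  rw [List.take_succ]
  rw [wt_append]
  congr 1
  have : L[l]? = some (L.get ⟨l, h⟩) := by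
    rw [List.getElem?_eq_getElem h]
    rfl
  rw [this]
  simp [wt]

lemma walk_to_cl {B : V S → V S → Prop} :
    ∀ (n : ℕ) (L : List (V S × V S)) (s t : S) (i j : Fin 2),
      L.length ≤ n → L ≠ [] → (∀ e ∈ L, B e.1 e.2) → Chained s L t →
      wt L = (j.val : ℤ) - (i.val : ℤ) → Cl B (s, i) (t, j) := by
  intro n
  induction n with
  | zero =>
      intro L s t i j hlen hne _ _ _
      exact absurd (List.length_eq_zero_iff.mp (by omega)) hne
  | succ n ih =>
      intro L s t i j hlen hne hB hch hwt
      obtain ⟨e, L', rfl⟩ := List.exists_cons_of_ne_nil hne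
      obtain ⟨he1, hch2⟩ := hch
      have hBe : B e.1 e.2 := hB e (by simp)
      have hwe := wtE_bounds e
      have hi := i.isLt
      have hj := j.isLt
      rcases eq_or_ne L' [] with rfl | hL'
      · have ht : e.2.1 = t := hch2
        have hwt1 : wt [e] = wtE e := by simp
        have hcl := single_edge hBe i j (by omega)
        rwa [he1, ht] at hcl
      · have hlenL' : L'.length ≤ n := by
          simp only [List.length_cons] at hlen; omega
        have hB' : ∀ e' ∈ L', B e'.1 e'.2 := fun e' he' => hB e' (by simp [he'])
        have hwL : wt (e :: L') = wtE e + wt L' := wt_cons e L'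
        by_cases h0 : (i.val : ℤ) + wtE e = 0 ∨ (i.val : ℤ) + wtE e = 1
        · have hm : ∃ m : Fin 2, (m.val : ℤ) = (i.val : ℤ) + wtE e := by
            rcases h0 with h0 | h0
            · exact ⟨0, by simp [h0]⟩
            · exact ⟨1, by simp [h0]⟩
          obtain ⟨m, hmv⟩ := hm
          have hcl1 : Cl B (s, i) (e.2.1, m) := by
            have := single_edge hBe i m (by omega)
            rwa [he1] at this
          have hcl2 : Cl B (e.2.1, m) (t, j) :=
            ih L' e.2.1 t m j hlenL' hL' hB' hch2 (by omega)
          exact hcl1.trans hcl2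
        · push_neg at h0
          -- shared crossing machinery
          have key : (∃ l, 2 ≤ l ∧ l < (e :: L').length ∧ wt ((e :: L').take l) = 0) →
              Cl B (s, i) (t, j) := by
            rintro ⟨l₀, hl2, hllt, hz⟩
            have hsplit := List.take_append_drop l₀ (e :: L')
            have hch' : Chained s ((e :: L').take l₀ ++ (e :: L').drop l₀) t := by
              rw [hsplit]; exact ⟨he1, hch2⟩
            obtain ⟨u, hcu1, hcu2⟩ := chained_split hch'
            have ht1 : ((e :: L').take l₀).length = l₀ := by
              rw [List.length_take]; omega
            have ht2 : ((e :: L').drop l₀).length = (e :: L').length - l₀ :=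
              List.length_drop
            have hwd : wt ((e :: L').take l₀) + wt ((e :: L').drop l₀) = wt (e :: L') := by
              rw [← wt_append, hsplit]
            have hlen1 : ((e :: L').take l₀).length ≤ n := by omega
            have hlen2 : ((e :: L').drop l₀).length ≤ n := by omega
            have hnil1 : (e :: L').take l₀ ≠ [] :=
              List.ne_nil_of_length_pos (by omega)
            have hnil2 : (e :: L').drop l₀ ≠ [] :=
              List.ne_nil_of_length_pos (by omega)
            have hwt1 : wt ((e :: L').take l₀) = (i.val : ℤ) - (i.val : ℤ) := by omega
            have hwt2 : wt ((e :: L').drop l₀) = (j.val : ℤ) - (i.val : ℤ) := by omega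
            have hcl1 : Cl B (s, i) (u, i) :=
              ih _ s u i i hlen1 hnil1
                (fun e' he' => hB e' (by rw [← hsplit]; exact List.mem_append_left _ he'))
                hcu1 hwt1
            have hcl2 : Cl B (u, i) (t, j) :=
              ih _ u t i j hlen2 hnil2
                (fun e' he' => hB e' (by rw [← hsplit]; exact List.mem_append_right _ he'))
                hcu2 hwt2
            exact hcl1.trans hcl2
          have hmval : ((i.val : ℤ) = 0 ∧ wtE e = -1) ∨ ((i.val : ℤ) = 1 ∧ wtE e = 1) := by
            omega
          rcases hmval with ⟨hi0, hwe1⟩ | ⟨hi1, hwe1⟩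
          · by_cases hj0 : j.val = 0
            · -- flip via coordinate 1
              have hcl1 : Cl B (s, (1 : Fin 2)) (e.2.1, (0 : Fin 2)) := by
                have := single_edge hBe 1 0 (by simp [hwe1])
                rwa [he1] at this
              have hcl2 : Cl B (e.2.1, (0 : Fin 2)) (t, (1 : Fin 2)) :=
                ih L' e.2.1 t 0 1 hlenL' hL' hB' hch2 (by simp; omega)
              have hcl3 := Cl.mirror s t 1 0 (hcl1.trans hcl2)
              have hii : i = (0 : Fin 2) := Fin.ext (by omega)
              have hjj : j = (0 : Fin 2) := Fin.ext (by omega)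
              rw [hii, hjj]
              exact hcl3
            · -- crossing upward
              apply key
              have hfull : wt (e :: L') = 1 := by omega
              have hex : ∃ l, 1 ≤ l ∧ 0 ≤ wt ((e :: L').take l) :=
                ⟨(e :: L').length, by simp, by rw [List.take_length]; omega⟩
              refine ⟨Nat.find hex, ?_, ?_, ?_⟩
              all_goals {
                obtain ⟨hf1, hf2⟩ := Nat.find_spec hex
                have hfle : Nat.find hex ≤ (e :: L').length :=
                  Nat.find_min' hex ⟨by simp, by rw [List.take_length]; omega⟩
                have hne1 : Nat.find hex ≠ 1 := by
                  intro h1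
                  rw [h1] at hf2
                  have : wt ((e :: L').take 1) = wtE e := by simp
                  omega
                have hge2 : 2 ≤ Nat.find hex := by omega
                have hmin := Nat.find_min hex (m := Nat.find hex - 1) (by omega)
                have hneg : wt ((e :: L').take (Nat.find hex - 1)) ≤ -1 := by
                  by_contra hcon
                  exact hmin ⟨by omega, by omega⟩
                have hstep : wt ((e :: L').take (Nat.find hex - 1 + 1)) =
                    wt ((e :: L').take (Nat.find hex - 1)) +
                      wtE ((e :: L').get ⟨Nat.find hex - 1, by omega⟩) :=
                  wt_take_succ _ _ (by omega)
                rw [Nat.sub_add_cancel (by omega)] at hstep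
                have hgb := wtE_bounds ((e :: L').get ⟨Nat.find hex - 1, by omega⟩)
                have hzz : wt ((e :: L').take (Nat.find hex)) = 0 := by omega
                have hlt : Nat.find hex < (e :: L').length := by
                  rcases Nat.lt_or_ge (Nat.find hex) (e :: L').length with h | h
                  · exact h
                  · exfalso
                    have : Nat.find hex = (e :: L').length := by omega
                    rw [this, List.take_length] at hzz
                    omega
                first
                  | exact hge2
                  | exact hlt
                  | exact hzz
              }
          · by_cases hj1 : j.val = 1
            · have hcl1 : Cl B (s, (0 : Fin 2)) (e.2.1, (1 : Fin 2)) := by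
                have := single_edge hBe 0 1 (by simp [hwe1])
                rwa [he1] at this
              have hcl2 : Cl B (e.2.1, (1 : Fin 2)) (t, (0 : Fin 2)) :=
                ih L' e.2.1 t 1 0 hlenL' hL' hB' hch2 (by simp; omega)
              have hcl3 := Cl.mirror s t 0 1 (hcl1.trans hcl2)
              have hii : i = (1 : Fin 2) := Fin.ext (by omega)
              have hjj : j = (1 : Fin 2) := Fin.ext (by omega)
              rw [hii, hjj]
              exact hcl3
            · apply key
              have hfull : wt (e :: L') = -1 := by omega
              have hex : ∃ l, 1 ≤ l ∧ wt ((e :: L').take l) ≤ 0 :=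
                ⟨(e :: L').length, by simp, by rw [List.take_length]; omega⟩
              refine ⟨Nat.find hex, ?_, ?_, ?_⟩
              all_goals {
                obtain ⟨hf1, hf2⟩ := Nat.find_spec hex
                have hfle : Nat.find hex ≤ (e :: L').length :=
                  Nat.find_min' hex ⟨by simp, by rw [List.take_length]; omega⟩
                have hne1 : Nat.find hex ≠ 1 := by
                  intro h1
                  rw [h1] at hf2
                  have : wt ((e :: L').take 1) = wtE e := by simp
                  omega
                have hge2 : 2 ≤ Nat.find hex := by omega
                have hmin := Nat.find_min hex (m := Nat.find hex - 1) (by omega)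
                have hneg : 1 ≤ wt ((e :: L').take (Nat.find hex - 1)) := by
                  by_contra hcon
                  exact hmin ⟨by omega, by omega⟩
                have hstep : wt ((e :: L').take (Nat.find hex - 1 + 1)) =
                    wt ((e :: L').take (Nat.find hex - 1)) +
                      wtE ((e :: L').get ⟨Nat.find hex - 1, by omega⟩) :=
                  wt_take_succ _ _ (by omega)
                rw [Nat.sub_add_cancel (by omega)] at hstep
                have hgb := wtE_bounds ((e :: L').get ⟨Nat.find hex - 1, by omega⟩)
                have hzz : wt ((e :: L').take (Nat.find hex)) = 0 := by omega
                have hlt : Nat.find hex < (e :: L').length := by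
                  rcases Nat.lt_or_ge (Nat.find hex) (e :: L').length with h | h
                  · exact h
                  · exfalso
                    have : Nat.find hex = (e :: L').length := by omega
                    rw [this, List.take_length] at hzz
                    omega
                first
                  | exact hge2
                  | exact hlt
                  | exact hzz
              }


lemma no_zero_walk_of_mti {Q : V S → V S → Prop}
    (ht : ∀ p q r, Q p q → Q q r → Q p r)
    (hm : ∀ (s t : S) (c c' : Fin 2), Q (s, c) (t, c) → Q (s, c') (t, c'))
    (hi : ∀ p, ¬ Q p p)
    {z : S} {W : List (V S × V S)} (hne : W ≠ []) (hQW : ∀ e ∈ W, Q e.1 e.2)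
    (hch : Chained z W z) (hwt : wt W = 0) : False := by
  have hcl : Cl Q ((z, (0 : Fin 2))) ((z, (0 : Fin 2))) :=
    walk_to_cl W.length W z z 0 0 le_rfl hne hQW hch (by simpa using hwt)
  exact hi _ (cl_subset (fun p q h => h) ht hm _ _ hcl)

lemma first_split (P : V S × V S → Prop) :
    ∀ L : List (V S × V S), (∀ e ∈ L, P e) ∨
      ∃ A eo C, L = A ++ eo :: C ∧ (∀ e' ∈ A, P e') ∧ ¬ P eo := by
  intro L
  induction L with
  | nil => left; simp
  | cons e L ih =>
      by_cases hP : P e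
      · rcases ih with h | ⟨A, eo, C, rfl, hA, heo⟩
        · left
          intro e' he'
          rcases List.mem_cons.mp he' with rfl | h'
          · exact hP
          · exact h e' h'
        · right
          exact ⟨e :: A, eo, C, rfl, fun e' he' => by
            rcases List.mem_cons.mp he' with rfl | h'
            · exact hP
            · exact hA e' h', heo⟩
      · right
        exact ⟨[], e, L, rfl, by simp, hP⟩

/-- Peel a walk from `t` to `s` over `Q ∪ E` (where every `E`-edge goes from `s` to `t`
with weight `d`) into `Q`-only segments from `t` to `s`. -/
lemma peel {Q : V S → V S → Prop} {s t : S} {d : ℤ} :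
    ∀ (n : ℕ) (L : List (V S × V S)), L.length ≤ n →
      (∀ e ∈ L, Q e.1 e.2 ∨ (e.1.1 = s ∧ e.2.1 = t ∧ wtE e = d)) →
      Chained t L s →
      ∃ (segs : List (List (V S × V S))) (k : ℕ),
        segs.length = k + 1 ∧
        (∀ σ ∈ segs, (∀ e ∈ σ, Q e.1 e.2) ∧ Chained t σ s) ∧
        (segs.map wt).sum = wt L - d * k := by
  intro n
  induction n with
  | zero =>
      intro L hlen hQE hch
      have : L = [] := List.length_eq_zero_iff.mp (by omega)
      subst this
      exact ⟨[[]], 0, rfl, by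
        intro σ hσ
        simp at hσ
        subst hσ
        exact ⟨by simp, hch⟩, by simp⟩
  | succ n ih =>
      intro L hlen hQE hch
      rcases first_split (fun e => Q e.1 e.2) L with hall | ⟨A, eo, C, rfl, hA, heo⟩
      · exact ⟨[L], 0, rfl, fun σ hσ => by
          simp at hσ; subst hσ; exact ⟨hall, hch⟩, by simp⟩
      · have heo' : eo.1.1 = s ∧ eo.2.1 = t ∧ wtE eo = d := by
          rcases hQE eo (by simp) with h | h
          · exact absurd h heo
          · exact h
        obtain ⟨hu, hcA1⟩ := chained_split hch
        obtain ⟨he1, hchC⟩ := hcA1.2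
        -- hcA1.1 : Chained t A hu;  he1 : eo.1.1 = hu; hchC : Chained eo.2.1 C s
        have hAseg : Chained t A s := by
          rw [← heo'.1, he1] at *
          exact hcA1.1
        have hchC' : Chained t C s := by
          rw [← heo'.2.1]
          exact hchC
        have hClen : C.length ≤ n := by
          have := congrArg List.length (rfl : A ++ eo :: C = A ++ eo :: C)
          have hl : (A ++ eo :: C).length = A.length + C.length + 1 := by
            simp [List.length_append]
            omega
          omega
        obtain ⟨segs, k, hk, hsegs, hsum⟩ := ih C hClen
          (fun e he => hQE e (by simp [he])) hchC'
        refine ⟨A :: segs, k + 1, by simp [hk], ?_, ?_⟩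
        · intro σ hσ
          rcases List.mem_cons.mp hσ with rfl | h'
          · exact ⟨hA, hAseg⟩
          · exact hsegs σ h'
        · have hwtL : wt (A ++ eo :: C) = wt A + d + wt C := by
            rw [wt_append, wt_cons, heo'.2.2]; ring
          simp only [List.map_cons, List.sum_cons]
          rw [hsum, hwtL]
          push_cast
          ring


lemma chained_join {s : S} :
    ∀ Ls : List (List (V S × V S)), (∀ σ ∈ Ls, Chained s σ s) → Chained s Ls.flatten s := by
  intro Ls
  induction Ls with
  | nil => intro _; rfl
  | cons σ Ls ih =>
      intro h
      rw [List.flatten_cons]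
      exact chained_append (h σ (by simp)) (ih fun σ' h' => h σ' (by simp [h']))

lemma wt_join : ∀ Ls : List (List (V S × V S)), wt Ls.flatten = (Ls.map wt).sum := by
  intro Ls
  induction Ls with
  | nil => rfl
  | cons σ Ls ih => rw [List.flatten_cons, wt_append, ih]; simp

lemma sum_map_const_add {α : Type*} (l : List α) (c : ℤ) (g : α → ℤ) :
    (l.map (fun x => c + g x)).sum = l.length * c + (l.map g).sum := by
  induction l with
  | nil => simp
  | cons a l ih => simp [ih]; push_cast; ring

/-- From a reflexive pair in the closure of `Q` plus a single extra pair `(x, y)`,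
either outright contradiction (if `Q` is m.t.i.) or a family of `Q`-segments. -/
lemma side {Q : V S → V S → Prop}
    (ht : ∀ p q r, Q p q → Q q r → Q p r)
    (hm : ∀ (s t : S) (c c' : Fin 2), Q (s, c) (t, c) → Q (s, c') (t, c'))
    (hi : ∀ p, ¬ Q p p)
    {x y : V S}
    (h : ∃ p, Cl (fun a b => Q a b ∨ (a = x ∧ b = y)) p p) :
    ∃ segs : List (List (V S × V S)), 1 ≤ segs.length ∧
      (∀ σ ∈ segs, (∀ e ∈ σ, Q e.1 e.2) ∧ Chained y.1 σ x.1) ∧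
      (segs.map wt).sum = -(((y.2.val : ℤ) - (x.2.val : ℤ)) * segs.length) := by
  obtain ⟨p, hp⟩ := h
  obtain ⟨W, hWne, hWQE, hWch, hWwt⟩ := cl_to_walk hp
  have hWwt0 : wt W = 0 := by rw [hWwt]; ring
  have hQE : ∀ e ∈ W, Q e.1 e.2 ∨ (e.1.1 = x.1 ∧ e.2.1 = y.1 ∧ wtE e = (y.2.val : ℤ) - (x.2.val : ℤ)) := by
    intro e he
    rcases hWQE e he with h | ⟨h1, h2⟩
    · exact Or.inl h
    · right
      refine ⟨by rw [h1], by rw [h2], ?_⟩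
      simp only [wtE, h1, h2]
  rcases first_split (fun e => Q e.1 e.2) W with hall | ⟨A, eo, C, rfl, hA, heo⟩
  · exact absurd (no_zero_walk_of_mti ht hm hi hWne hall hWch hWwt0) id
  · have heo' : eo.1.1 = x.1 ∧ eo.2.1 = y.1 ∧ wtE eo = (y.2.val : ℤ) - (x.2.val : ℤ) := by
      rcases hQE eo (by simp) with h | h
      · exact absurd h heo
      · exact h
    obtain ⟨u, hcA, hcEC⟩ := chained_split hWch
    obtain ⟨he1, hchC⟩ := hcEC
    have hcA' : Chained p.1 A x.1 := by rw [← heo'.1, he1]; exact hcA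
    have hchC' : Chained y.1 C p.1 := by rw [← heo'.2.1]; exact hchC
    have hchW' : Chained y.1 (C ++ A) x.1 := chained_append hchC' hcA'
    have hwtW' : wt (C ++ A) = -((y.2.val : ℤ) - (x.2.val : ℤ)) := by
      have h1 : wt (A ++ eo :: C) = wt A + wtE eo + wt C := by
        rw [wt_append, wt_cons]; ring
      have h2 : wt (C ++ A) = wt C + wt A := wt_append _ _
      rw [heo'.2.2] at h1
      omega
    obtain ⟨segs, k, hk, hsegs, hsum⟩ := peel (Q := Q) (C ++ A).length (C ++ A) le_rfl
      (fun e he => by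
        rcases List.mem_append.mp he with h | h
        · exact hQE e (by simp [h])
        · exact hQE e (by simp [h]))
      hchW'
    refine ⟨segs, by omega, hsegs, ?_⟩
    rw [hsum, hwtW', hk]
    push_cast
    ring


lemma sum_map_mul_left' {α : Type*} (l : List α) (c : ℤ) (g : α → ℤ) :
    (l.map (fun x => c * g x)).sum = c * (l.map g).sum := by
  induction l with
  | nil => simp
  | cons a l ih => simp [ih]; ring

lemma no_extension_contra {Q : V S → V S → Prop}
    (ht : ∀ p q r, Q p q → Q q r → Q p r)
    (hm : ∀ (s t : S) (c c' : Fin 2), Q (s, c) (t, c) → Q (s, c') (t, c'))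
    (hi : ∀ p, ¬ Q p p)
    {x y : V S} (hxy : x ≠ y)
    (hpos : ∃ p, Cl (fun a b => Q a b ∨ (a = x ∧ b = y)) p p)
    (hneg : ∃ p, Cl (fun a b => Q a b ∨ (a = y ∧ b = x)) p p) : False := by
  obtain ⟨segsP, hP1, hPseg, hPsum⟩ := side ht hm hi hpos
  obtain ⟨segsR, hR1, hRseg, hRsum⟩ := side ht hm hi hneg
  set d : ℤ := (y.2.val : ℤ) - (x.2.val : ℤ) with hd
  have hRsum' : (segsR.map wt).sum = d * segsR.length := by
    rw [hRsum]; rw [hd]; ring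
  set Z := (segsR.map (fun σR => (segsP.map (fun σP => σR ++ σP)).flatten)).flatten with hZ
  have hZch : Chained x.1 Z x.1 := by
    apply chained_join
    intro blk hblk
    simp only [List.mem_map] at hblk
    obtain ⟨σR, hσR, rfl⟩ := hblk
    apply chained_join
    intro blk2 hblk2
    simp only [List.mem_map] at hblk2
    obtain ⟨σP, hσP, rfl⟩ := hblk2
    exact chained_append (hRseg σR hσR).2 (hPseg σP hσP).2
  have hZQ : ∀ e ∈ Z, Q e.1 e.2 := by
    intro e he
    rw [hZ] at he
    rw [List.mem_flatten] at he
    obtain ⟨blk, hblk, he⟩ := he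
    simp only [List.mem_map] at hblk
    obtain ⟨σR, hσR, rfl⟩ := hblk
    rw [List.mem_flatten] at he
    obtain ⟨blk2, hblk2, he⟩ := he
    simp only [List.mem_map] at hblk2
    obtain ⟨σP, hσP, rfl⟩ := hblk2
    rcases List.mem_append.mp he with h | h
    · exact (hRseg σR hσR).1 e h
    · exact (hPseg σP hσP).1 e h
  have hZwt : wt Z = 0 := by
    rw [hZ, wt_join, List.map_map]
    have hblk : ∀ σR : List (V S × V S),
        (wt ∘ fun σR => (segsP.map (fun σP => σR ++ σP)).flatten) σR
          = (segsP.length : ℤ) * wt σR + (segsP.map wt).sum := by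
      intro σR
      simp only [Function.comp]
      rw [wt_join, List.map_map]
      have : (wt ∘ fun σP => σR ++ σP) = fun σP => wt σR + wt σP := by
        funext σP
        simp [Function.comp, wt_append]
      rw [this, sum_map_const_add]
      try ring
    rw [funext hblk]
    rw [show (fun σR : List (V S × V S) => (segsP.length : ℤ) * wt σR + (segsP.map wt).sum)
        = fun σR => ((segsP.map wt).sum) + ((segsP.length : ℤ) * wt σR) by funext σR; ring]
    rw [sum_map_const_add]
    rw [sum_map_mul_left', hRsum', hPsum]
    try push_cast
    try ring
  have hZne : Z ≠ [] := by
    intro hz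
    rw [hZ] at hz
    rw [List.flatten_eq_nil_iff] at hz
    obtain ⟨σR₀, hσR₀⟩ := List.exists_mem_of_length_pos (by omega : 0 < segsR.length)
    obtain ⟨σP₀, hσP₀⟩ := List.exists_mem_of_length_pos (by omega : 0 < segsP.length)
    have hblk := hz _ (List.mem_map_of_mem hσR₀)
    rw [List.flatten_eq_nil_iff] at hblk
    have hpair := hblk _ (List.mem_map_of_mem hσP₀)
    rw [List.append_eq_nil_iff] at hpair
    by_cases hst : x.1 = y.1
    · -- d ≠ 0 in this case; all σP are empty, contradicting the sum
      have hd0 : d ≠ 0 := by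
        intro h0
        apply hxy
        have hv : x.2 = y.2 := Fin.ext (by omega)
        exact Prod.ext hst hv
      have hallP : ∀ σP ∈ segsP, σP = [] := by
        intro σP hσP
        have := hblk _ (List.mem_map_of_mem hσP)
        rw [List.append_eq_nil_iff] at this
        exact this.2
      have hsum0 : (segsP.map wt).sum = 0 := by
        apply List.sum_eq_zero
        intro z hzz
        rw [List.mem_map] at hzz
        obtain ⟨σP, hσP, rfl⟩ := hzz
        rw [hallP σP hσP]
        rfl
      rw [hsum0] at hPsum
      have : d * (segsP.length : ℤ) = 0 := by omega
      rcases mul_eq_zero.mp this with h | h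
      · exact hd0 h
      · have : segsP.length = 0 := by exact_mod_cast h
        omega
    · apply hst
      have h0 : σR₀ = [] := hpair.1
      have hc := (hRseg σR₀ hσR₀).2
      rw [h0] at hc
      exact hc
  exact no_zero_walk_of_mti ht hm hi hZne hZQ hZch hZwt


def edgeR (f : S → Fin 2 × Fin 2 → Set S) : V S → V S → Prop :=
  fun p q => q.1 ∈ f p.1 (p.2, q.2)

def GoodSet (f : S → Fin 2 × Fin 2 → Set S) : Set (Set ((V S) × V S)) :=
  {Q | (∀ p q : V S, edgeR f p q → (p, q) ∈ Q) ∧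
       (∀ p q r : V S, (p, q) ∈ Q → (q, r) ∈ Q → (p, r) ∈ Q) ∧
       (∀ (s t : S) (c c' : Fin 2), ((s, c), (t, c)) ∈ Q → ((s, c'), (t, c')) ∈ Q) ∧
       (∀ p : V S, (p, p) ∉ Q)}

lemma goodset_zorn (f : S → Fin 2 × Fin 2 → Set S) {Q₀ : Set ((V S) × V S)}
    (h₀ : Q₀ ∈ GoodSet f) : ∃ M, Q₀ ⊆ M ∧ Maximal (· ∈ GoodSet f) M := by
  apply zorn_subset_nonempty
  · intro c hc hchain hcne
    obtain ⟨Q₁, hQ₁⟩ := hcne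
    refine ⟨⋃₀ c, ⟨?_, ?_, ?_, ?_⟩, fun s hs => Set.subset_sUnion_of_mem hs⟩
    · intro p q h
      exact Set.mem_sUnion.mpr ⟨Q₁, hQ₁, (hc hQ₁).1 p q h⟩
    · intro p q r hpq hqr
      obtain ⟨Qa, hQa, hpq⟩ := Set.mem_sUnion.mp hpq
      obtain ⟨Qb, hQb, hqr⟩ := Set.mem_sUnion.mp hqr
      rcases eq_or_ne Qa Qb with rfl | hab
      · exact Set.mem_sUnion.mpr ⟨Qa, hQa, (hc hQa).2.1 p q r hpq hqr⟩
      · rcases hchain hQa hQb hab with h | h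
        · exact Set.mem_sUnion.mpr ⟨Qb, hQb, (hc hQb).2.1 p q r (h hpq) hqr⟩
        · exact Set.mem_sUnion.mpr ⟨Qa, hQa, (hc hQa).2.1 p q r hpq (h hqr)⟩
    · intro s t c c' h
      obtain ⟨Qa, hQa, h⟩ := Set.mem_sUnion.mp h
      exact Set.mem_sUnion.mpr ⟨Qa, hQa, (hc hQa).2.2.1 s t c c' h⟩
    · intro p hp
      obtain ⟨Qa, hQa, hp⟩ := Set.mem_sUnion.mp hp
      exact (hc hQa).2.2.2 p hp
  · exact h₀

lemma maximal_total {f : S → Fin 2 × Fin 2 → Set S} {M : Set ((V S) × V S)}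
    (hM : Maximal (· ∈ GoodSet f) M) :
    ∀ x y : V S, x ≠ y → (x, y) ∈ M ∨ (y, x) ∈ M := by
  intro x y hxy
  by_contra hcon
  push_neg at hcon
  obtain ⟨hxy1, hxy2⟩ := hcon
  obtain ⟨hMedge, hMtrans, hMmirror, hMirr⟩ := hM.1
  have hQtrans : ∀ p q r : V S, (p, q) ∈ M → (q, r) ∈ M → (p, r) ∈ M := hMtrans
  -- helper: if the closure of M plus one pair is irreflexive, M grows
  have grow : ∀ u v : V S, (u, v) ∉ M →
      (¬ ∃ p, Cl (fun a b => (a, b) ∈ M ∨ (a = u ∧ b = v)) p p) → False := by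
    intro u v huv hir
    set Q' : Set ((V S) × V S) :=
      {pq | Cl (fun a b => (a, b) ∈ M ∨ (a = u ∧ b = v)) pq.1 pq.2} with hQ'
    have hQ'good : Q' ∈ GoodSet f := by
      refine ⟨?_, ?_, ?_, ?_⟩
      · intro p q h
        exact Cl.base (Or.inl (hMedge p q h))
      · intro p q r hpq hqr
        exact Cl.trans hpq hqr
      · intro s t c c' h
        exact Cl.mirror s t c c' h
      · intro p hp
        exact hir ⟨p, hp⟩
    have hsub : M ⊆ Q' := fun pq hpq => Cl.base (Or.inl hpq)
    have := hM.2 hQ'good hsub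
    exact huv (this (Cl.base (Or.inr ⟨rfl, rfl⟩)))
  by_cases hpos : ∃ p, Cl (fun a b => (a, b) ∈ M ∨ (a = x ∧ b = y)) p p
  · by_cases hneg : ∃ p, Cl (fun a b => (a, b) ∈ M ∨ (a = y ∧ b = x)) p p
    · exact no_extension_contra (fun p q r => hMtrans p q r) hMmirror hMirr hxy hpos hneg
    · exact grow y x hxy2 hneg
  · exact grow x y hxy1 hpos


lemma chained_ofFn (n : ℕ) (vs : Fin (n + 1) → S) (a b : Fin n → Fin 2) :
    Chained (vs 0)
      (List.ofFn (fun l : Fin n => (((vs l.castSucc, a l) : V S), ((vs l.succ, b l) : V S))))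
      (vs (Fin.last n)) := by
  induction n with
  | zero =>
      show vs 0 = vs (Fin.last 0)
      rfl
  | succ n ih =>
      rw [List.ofFn_succ]
      refine ⟨by simp, ?_⟩
      have h := ih (fun l => vs l.succ) (fun l => a l.succ) (fun l => b l.succ)
      simpa only [Fin.succ_castSucc, Fin.succ_last] using h

lemma wt_ofFn {n : ℕ} (F : Fin n → (V S × V S)) :
    wt (List.ofFn F) = ∑ l : Fin n, wtE (F l) := by
  rw [wt, List.map_ofFn, List.sum_ofFn]
  rfl


lemma chained_src {W : List (V S × V S)} {z u : S} (h : Chained z W u) (hne : 0 < W.length) :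
    (W.get ⟨0, hne⟩).1.1 = z := by
  cases W with
  | nil => simp at hne
  | cons e W => exact h.1

lemma chained_consec {W : List (V S × V S)} {z u : S} (h : Chained z W u) :
    ∀ l (h1 : l + 1 < W.length),
      (W.get ⟨l, by omega⟩).2.1 = (W.get ⟨l + 1, h1⟩).1.1 := by
  induction W generalizing z with
  | nil => intro l h1; simp at h1
  | cons e W ih =>
      intro l h1
      cases l with
      | zero =>
          have h0 : 0 < W.length := by simpa using h1
          exact (chained_src h.2 h0).symm
      | succ l =>
          exact ih h.2 l (by simpa using h1)

lemma chained_dst {W : List (V S × V S)} {z u : S} (h : Chained z W u) (hne : 0 < W.length) :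
    (W.get ⟨W.length - 1, by omega⟩).2.1 = u := by
  induction W generalizing z with
  | nil => simp at hne
  | cons e W ih =>
      cases W with
      | nil => exact h.2
      | cons e' W' =>
          have := ih h.2 (by simp)
          simpa using this

lemma exists_finwalk_of_listwalk {f : S → Fin 2 × Fin 2 → Set S} {z : S}
    {W : List (V S × V S)} (hne : W ≠ [])
    (hQ : ∀ e ∈ W, edgeR f e.1 e.2) (hch : Chained z W z) (hwt : wt W = 0) :
    ∃ (n : ℕ) (vs : Fin (n + 1) → S) (a b : Fin n → Fin 2),
      0 < n ∧
      vs (Fin.last n) = vs 0 ∧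
      (∀ l : Fin n, vs l.succ ∈ f (vs l.castSucc) (a l, b l)) ∧
      (∑ l : Fin n, ((b l : ℤ) - (a l : ℤ))) = 0 := by
  have hn : 0 < W.length := List.length_pos_iff.mpr hne
  refine ⟨W.length,
    fun l => if h : (l : ℕ) < W.length then (W.get ⟨l, h⟩).1.1 else z,
    fun l => (W.get ⟨l, l.isLt⟩).1.2,
    fun l => (W.get ⟨l, l.isLt⟩).2.2, hn, ?_, ?_, ?_⟩
  · beta_reduce
    have h1 : ¬ ((Fin.last W.length : ℕ) < W.length) := by simp
    have h2 : (((0 : Fin (W.length + 1))) : ℕ) < W.length := by simpa using hn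
    rw [dif_neg h1, dif_pos h2]
    exact (chained_src hch h2).symm
  · intro l
    beta_reduce
    have h2 : ((l.castSucc : Fin (W.length + 1)) : ℕ) < W.length := by
      simpa using l.isLt
    have hmem := hQ (W.get ⟨l, l.isLt⟩) (List.get_mem W _)
    rw [dif_pos h2]
    have hget : (W.get ⟨((l.castSucc : Fin (W.length + 1)) : ℕ), h2⟩) = W.get ⟨l, l.isLt⟩ := by
      congr 1
    rw [hget]
    by_cases h3 : (l : ℕ) + 1 < W.length
    · have hv : ((l.succ : Fin (W.length + 1)) : ℕ) = (l : ℕ) + 1 := rfl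
      rw [dif_pos (show ((l.succ : Fin (W.length + 1)) : ℕ) < W.length from by rw [hv]; exact h3)]
      have hget2 : (W.get ⟨((l.succ : Fin (W.length + 1)) : ℕ), by rw [hv]; exact h3⟩)
          = W.get ⟨(l : ℕ) + 1, h3⟩ := by
        congr 1
      rw [hget2, ← chained_consec hch l h3]
      exact hmem
    · have hv : ((l.succ : Fin (W.length + 1)) : ℕ) = (l : ℕ) + 1 := rfl
      have hnlt : ¬ (((l.succ : Fin (W.length + 1)) : ℕ) < W.length) := by omega
      rw [dif_neg hnlt]
      have hdst := chained_dst hch hn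
      have hget2 : W.get ⟨W.length - 1, by omega⟩ = W.get ⟨l, l.isLt⟩ := by
        congr 1
        exact Fin.ext (by simp; omega)
      rw [hget2] at hdst
      rw [← hdst]
      exact hmem
  · beta_reduce
    have hW : W = List.ofFn (fun l : Fin W.length => W.get l) := (List.ofFn_get W).symm
    have hcalc : (∑ l : Fin W.length,
        (((W.get ⟨l, l.isLt⟩).2.2.val : ℤ) - ((W.get ⟨l, l.isLt⟩).1.2.val : ℤ)))
        = wt W := by
      conv_rhs => rw [hW]
      rw [wt_ofFn]
      apply Finset.sum_congr rfl
      intro l _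
      rfl
    rw [← hwt, ← hcalc]
    try rfl

end CyclingMachine


open CyclingMachine in
theorem compatible_order_iff_no_zero_weight_closed_walk'
    {S : Type} [Fintype S] (f : S → Fin 2 × Fin 2 → Set S) :
    (∃ r : S × Fin 2 → S × Fin 2 → Prop,
      (IsStrictTotalOrder (S × Fin 2) r ∧
      (∀ (s t : S) (i j : Fin 2), r (s, i) (t, i) ↔ r (s, j) (t, j)) ∧
      (∀ (s t : S) (i j : Fin 2), t ∈ f s (i, j) → r (s, i) (t, j)))) ↔
    ¬ ∃ (n : ℕ) (vs : Fin (n+1) → S) (a b : Fin n → Fin 2),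
        0 < n ∧
        vs (Fin.last n) = vs 0 ∧
        (∀ l : Fin n, vs l.succ ∈ f (vs l.castSucc) (a l, b l)) ∧
        (∑ l : Fin n, ((b l : ℤ) - (a l : ℤ))) = 0 := by
  constructor
  · rintro ⟨r, hsto, hagree, hedge⟩ ⟨n, vs, a, b, hn, hclosed, hmem, hsum⟩
    obtain ⟨L, hLdef⟩ : ∃ L, L = List.ofFn
        (fun l : Fin n => (((vs l.castSucc, a l) : V S), ((vs l.succ, b l) : V S))) := ⟨_, rfl⟩
    have hch : Chained (vs 0) L (vs 0) := by
      rw [hLdef]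
      have := chained_ofFn n vs a b
      rwa [hclosed] at this
    have hne : L ≠ [] := by
      apply List.ne_nil_of_length_pos
      rw [hLdef]
      simp
      omega
    have hB : ∀ e ∈ L, edgeR f e.1 e.2 := by
      intro e he
      rw [hLdef, List.mem_ofFn] at he
      obtain ⟨l, rfl⟩ := he
      exact hmem l
    have hwt : wt L = 0 := by
      rw [hLdef, wt_ofFn, ← hsum]
      apply Finset.sum_congr rfl
      intro l _
      rfl
    have hcl := walk_to_cl L.length L (vs 0) (vs 0) 0 0 le_rfl hne hB hch
      (by rw [hwt]; simp)
    have hr : r (vs 0, 0) (vs 0, 0) := by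
      refine cl_subset ?_ ?_ ?_ _ _ hcl
      · exact fun p q h => hedge p.1 q.1 p.2 q.2 h
      · exact fun p q u hpq hqu => hsto.toIsStrictOrder.toIsTrans.trans p q u hpq hqu
      · exact fun s t c c' h => (hagree s t c c').mp h
    exact hsto.toIsStrictOrder.toIrrefl.irrefl _ hr
  · intro hno
    classical
    have hirr : ∀ p : V S, ¬ Cl (edgeR f) p p := by
      intro p hp
      obtain ⟨W, hWne, hWB, hWch, hWwt⟩ := cl_to_walk hp
      exact hno (exists_finwalk_of_listwalk hWne hWB hWch (by rw [hWwt]; ring))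
    have h₀ : {pq : (V S) × V S | Cl (edgeR f) pq.1 pq.2} ∈ GoodSet f := by
      refine ⟨?_, ?_, ?_, ?_⟩
      · exact fun p q h => Cl.base h
      · exact fun p q u h1 h2 => Cl.trans h1 h2
      · exact fun s t c c' h => Cl.mirror s t c c' h
      · exact fun p hp => hirr p hp
    obtain ⟨M, hM0, hMmax⟩ := goodset_zorn f h₀
    obtain ⟨hMedge, hMtrans, hMmirror, hMirr⟩ := hMmax.1
    have htot := maximal_total hMmax
    refine ⟨fun p q => (p, q) ∈ M, ?_, ?_, ?_⟩
    · refine { trichotomous := ?_, irrefl := ?_, trans := ?_ }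
      · intro p q
        rcases eq_or_ne p q with rfl | hne
        · exact fun _ _ => rfl
        · rcases htot p q hne with h | h
          · exact fun h1 _ => absurd h h1
          · exact fun _ h2 => absurd h h2
      · exact fun p => hMirr p
      · exact fun p q u => hMtrans p q u
    · intro s t i j
      exact ⟨fun h => hMmirror s t i j h, fun h => hMmirror s t j i h⟩
    · intro s t i j h
      exact hMedge (s, i) (t, j) h


/-- Let `M = (S, f, Δ_S)` be a cycling 2-machine, and let
`G_M` be the weighted directed multigraph on `S` with an edge from `s` to
`t` of weight `j - i` for each `s, t, i, j` with `t ∈ f(s,(i,j))`.  Then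
there is an `M`-compatible order on `S × [2]` iff `G_M` has no closed
directed walk of positive length of total weight `0`.  (A closed walk is a
state sequence `vs₀, …, vs_n` with `vs_n = vs₀`, each step following an edge
of `G_M`, i.e. a transition `vs_{l+1} ∈ f(vs_l, (a_l, b_l))`, whose total
weight is `∑ (b_l - a_l)`.) -/
theorem compatible_order_iff_no_zero_weight_closed_walk
    {S : Type} [Fintype S] (f : S → Fin 2 × Fin 2 → Set S) :
    (∃ r : S × Fin 2 → S × Fin 2 → Prop, MCompatibleOrder f r) ↔
    ¬ ∃ (n : ℕ) (vs : Fin (n+1) → S) (a b : Fin n → Fin 2),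
        0 < n ∧
        vs (Fin.last n) = vs 0 ∧
        (∀ l : Fin n, vs l.succ ∈ f (vs l.castSucc) (a l, b l)) ∧
        (∑ l : Fin n, ((b l : ℤ) - (a l : ℤ))) = 0 := by
  have h := compatible_order_iff_no_zero_weight_closed_walk' f
  unfold MCompatibleOrder
  exact h
end

section
/- Let G be a strongly connected directed multigraph with an integer weight attached to each edge. If G contains a closed directed walk of positive length with nonnegative total weight and a closed directed walk of positive length with nonpositive total weight, then G contains a closed directed walk of positive length with total weight exactly 0. -/
namespace ZWC

variable {V ED : Type} (src tgt : ED → V) (w : ED → ℤ)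

/-- a walk of length `L` from `u` to `v` of total weight `c`, ℕ-indexed. -/
def Nw (u v : V) (c : ℤ) (L : ℕ) : Prop :=
  ∃ (vs : ℕ → V) (es : ℕ → ED), vs 0 = u ∧ vs L = v ∧
    (∀ i < L, src (es i) = vs i ∧ tgt (es i) = vs (i+1)) ∧
    (∑ i ∈ Finset.range L, w (es i)) = c

lemma Nw.trans {u v x : V} {c d : ℤ} {L M : ℕ}
    (h1 : Nw src tgt w u v c L) (h2 : Nw src tgt w v x d M) :
    Nw src tgt w u x (c + d) (L + M) := by
  obtain ⟨vs1, es1, h10, h1L, h1e, h1s⟩ := h1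
  obtain ⟨vs2, es2, h20, h2M, h2e, h2s⟩ := h2
  refine ⟨fun i => if i ≤ L then vs1 i else vs2 (i - L),
          fun i => if i < L then es1 i else es2 (i - L), ?_, ?_, ?_, ?_⟩
  · simp [h10]
  · rcases Nat.eq_zero_or_pos M with hM | hM
    · subst hM; simpa using h1L.trans (h20.symm.trans h2M)
    · have h : ¬ (L + M ≤ L) := by omega
      simpa [h] using h2M
  · intro i hi
    by_cases h : i < L
    · have h' : i ≤ L := le_of_lt h
      have h'' : i + 1 ≤ L := h
      simpa [h, h', h''] using h1e i h
    · have h' : ¬ (i + 1 ≤ L) := by omega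
      rcases eq_or_lt_of_le (le_of_not_gt h) with he | hlt
      · subst he
        have h2 := h2e 0 (by omega)
        constructor
        · simp only [if_neg (lt_irrefl L), if_pos (le_refl L), Nat.sub_self]
          rw [h2.1, h20, h1L]
        · simp only [if_neg (lt_irrefl L), if_neg h', Nat.sub_self,
            (show L + 1 - L = 1 by omega)]
          rw [h2.2]
      · have h0 : ¬ (i ≤ L) := by omega
        have := h2e (i - L) (by omega)
        simp only [if_neg h0, if_neg h, if_neg h']
        rw [(show i + 1 - L = i - L + 1 by omega)]
        exact this
  · rw [Finset.sum_range_add]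
    have e1 : ∀ i ∈ Finset.range L, w (if i < L then es1 i else es2 (i - L)) = w (es1 i) := by
      intro i hi; rw [if_pos (Finset.mem_range.mp hi)]
    have e2 : ∀ i ∈ Finset.range M,
        w (if L + i < L then es1 (L + i) else es2 (L + i - L)) = w (es2 i) := by
      intro i hi
      rw [if_neg (by omega), (show L + i - L = i by omega)]
    rw [Finset.sum_congr rfl e1, Finset.sum_congr rfl e2, h1s, h2s]

lemma Nw.refl (e₀ : ED) (u : V) : Nw src tgt w u u 0 0 :=
  ⟨fun _ => u, fun _ => e₀, rfl, rfl, by omega, by simp⟩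

lemma Nw.pow (e₀ : ED) {u : V} {c : ℤ} {L : ℕ}
    (h : Nw src tgt w u u c L) (k : ℕ) : Nw src tgt w u u (k * c) (k * L) := by
  induction k with
  | zero => simpa using Nw.refl src tgt w e₀ u
  | succ k ih =>
    have := Nw.trans src tgt w ih h
    rw [show (k+1) * L = k * L + L from Nat.succ_mul k L,
        show ((↑(k+1) : ℤ)) * c = ↑k * c + c by push_cast; ring]
    exact this

/-- combine nonneg and nonpos closed walks at the same vertex. -/
lemma combine (e₀ : ED) {u : V} {x y : ℤ} {Lx Ly : ℕ}
    (hx : Nw src tgt w u u x Lx) (hy : Nw src tgt w u u y Ly)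
    (hx0 : 0 ≤ x) (hy0 : y ≤ 0) (hLx : 0 < Lx) (hLy : 0 < Ly) :
    ∃ L, 0 < L ∧ Nw src tgt w u u 0 L := by
  rcases eq_or_lt_of_le hx0 with he | hx0
  · exact ⟨Lx, hLx, he ▸ hx⟩
  rcases eq_or_lt_of_le hy0 with he | hy0
  · exact ⟨Ly, hLy, he.symm ▸ hy⟩
  have hy1 : 0 < (-y).toNat := by omega
  refine ⟨(-y).toNat * Lx + x.toNat * Ly,
    Nat.add_pos_left (Nat.mul_pos hy1 hLx) _, ?_⟩
  have h := Nw.trans src tgt w (Nw.pow src tgt w e₀ hx (-y).toNat)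
    (Nw.pow src tgt w e₀ hy x.toNat)
  have hcast : ((-y).toNat : ℤ) = -y := Int.toNat_of_nonneg (by omega)
  have hcast2 : ((x).toNat : ℤ) = x := Int.toNat_of_nonneg (by omega)
  have : ((-y).toNat : ℤ) * x + (x.toNat : ℤ) * y = 0 := by
    rw [hcast, hcast2]; ring
  rwa [this] at h

end ZWC

/-- Let `G` be a strongly connected directed multigraph
(vertex type `V`, edge type `ED`, with source `src`, target `tgt`, and an
integer weight `w` on each edge).  If `G` contains a closed directed walk of
positive length with nonnegative total weight and a closed directed walk of
positive length with nonpositive total weight, then `G` contains a closed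
directed walk of positive length with total weight exactly `0`. -/
theorem strongly_connected_zero_weight_closed_walk
    {V ED : Type} (src tgt : ED → V) (w : ED → ℤ)
    (hconn : ∀ u v : V, ∃ (n : ℕ) (vs : Fin (n+1) → V) (es : Fin n → ED),
      vs 0 = u ∧ vs (Fin.last n) = v ∧
      ∀ i : Fin n, src (es i) = vs i.castSucc ∧ tgt (es i) = vs i.succ)
    (hpos : ∃ (n : ℕ) (vs : Fin (n+1) → V) (es : Fin n → ED),
      0 < n ∧ vs (Fin.last n) = vs 0 ∧
      (∀ i : Fin n, src (es i) = vs i.castSucc ∧ tgt (es i) = vs i.succ) ∧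
      0 ≤ ∑ i : Fin n, w (es i))
    (hneg : ∃ (n : ℕ) (vs : Fin (n+1) → V) (es : Fin n → ED),
      0 < n ∧ vs (Fin.last n) = vs 0 ∧
      (∀ i : Fin n, src (es i) = vs i.castSucc ∧ tgt (es i) = vs i.succ) ∧
      ∑ i : Fin n, w (es i) ≤ 0) :
    ∃ (n : ℕ) (vs : Fin (n+1) → V) (es : Fin n → ED),
      0 < n ∧ vs (Fin.last n) = vs 0 ∧
      (∀ i : Fin n, src (es i) = vs i.castSucc ∧ tgt (es i) = vs i.succ) ∧
      ∑ i : Fin n, w (es i) = 0 := by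
  classical
  obtain ⟨n₁, vs₁, es₁, hn₁, hcl₁, he₁, hw₁⟩ := hpos
  obtain ⟨n₂, vs₂, es₂, hn₂, hcl₂, he₂, hw₂⟩ := hneg
  set e₀ : ED := es₁ ⟨0, hn₁⟩ with he₀
  -- converter from Fin-walks to Nw
  have toNw : ∀ (n : ℕ) (vs : Fin (n+1) → V) (es : Fin n → ED),
      (∀ i : Fin n, src (es i) = vs i.castSucc ∧ tgt (es i) = vs i.succ) →
      ZWC.Nw src tgt w (vs 0) (vs (Fin.last n)) (∑ i : Fin n, w (es i)) n := by
    intro n vs es he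
    refine ⟨fun i => if h : i ≤ n then vs ⟨i, by omega⟩ else vs 0,
            fun i => if h : i < n then es ⟨i, h⟩ else e₀, by simp, ?_, ?_, ?_⟩
    · simp [Fin.last]
    · intro i hi
      have h1 : i ≤ n := le_of_lt hi
      have h2 : i + 1 ≤ n := hi
      simp only [dif_pos hi, dif_pos h1, dif_pos h2]
      exact he ⟨i, hi⟩
    · rw [← Fin.sum_univ_eq_sum_range (fun i => w (if h : i < n then es ⟨i, h⟩ else e₀)) n]
      apply Finset.sum_congr rfl
      intro i _
      simp [i.isLt]
  have H₁ := toNw n₁ vs₁ es₁ he₁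
  rw [hcl₁] at H₁
  have H₂ := toNw n₂ vs₂ es₂ he₂
  rw [hcl₂] at H₂
  set u := vs₁ 0
  set v := vs₂ 0
  -- connectors
  obtain ⟨P, vsP, esP, hP0, hPL, hPe⟩ := hconn u v
  obtain ⟨Q, vsQ, esQ, hQ0, hQL, hQe⟩ := hconn v u
  have HP := toNw P vsP esP hPe
  rw [hP0, hPL] at HP
  have HQ := toNw Q vsQ esQ hQe
  rw [hQ0, hQL] at HQ
  set p := ∑ i : Fin P, w (esP i)
  set q := ∑ i : Fin Q, w (esQ i)
  -- get a zero-weight closed walk of positive length (as Nw)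
  have key : ∃ (z : V) (L : ℕ), 0 < L ∧ ZWC.Nw src tgt w z z 0 L := by
    rcases le_or_gt 0 (p + q) with hc | hc
    · -- at v : Q ++ A ++ P has weight q + a + p ≥ 0 ; pair with B
      have h := (ZWC.Nw.trans src tgt w (ZWC.Nw.trans src tgt w HQ H₁) HP)
      have := ZWC.combine src tgt w e₀ h H₂ (by omega) hw₂ (by omega) hn₂
      exact ⟨v, this⟩
    · -- at u : P ++ B ++ Q has weight p + b + q ≤ 0 ; pair with A
      have h := (ZWC.Nw.trans src tgt w (ZWC.Nw.trans src tgt w HP H₂) HQ)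
      have := ZWC.combine src tgt w e₀ H₁ h hw₁ (by omega) hn₁ (by omega)
      exact ⟨u, this⟩
  obtain ⟨z, L, hL, vsN, esN, hz0, hzL, hze, hzs⟩ := key
  refine ⟨L, fun i => vsN i.val, fun i => esN i.val, hL, ?_, ?_, ?_⟩
  · simp [Fin.last, hz0, hzL]
  · intro i
    exact hze i.val i.isLt
  · rw [Fin.sum_univ_eq_sum_range (fun i => w (esN i)) L]
    exact hzs
end
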